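/- arXiv:1412.4428 — 9 statements merged into one kernel-verified Lean document; each statement's English description precedes it below -/
import Mathlib

section
/- Let M be a bounded linear operator on L² = L²(Q) that is positivity improving. Suppose there exist a scalar ρ > 0 and positive functions φ, φ* ∈ L² such that Mφ = ρφ and M*φ* = ρφ*. Then φ and φ* are the unique positive eigenfunctions of M and M* up to scale: if ζ ∈ L² is positive and Mζ = λζ for some λ ∈ ℝ, then λ = ρ and ζ = sφ Q-a.e. for some s > 0; and likewise if ζ ∈ L² is positive and M*ζ = λζ for some λ ∈ ℝ, then λ = ρ and ζ = sφ* Q-a.e. for some s > 0. (Proposition A.1 of the paper.) -/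
open MeasureTheory
open scoped RealInnerProductSpace

/-!
Pairing with the positive eigenvector `φ*` of `M*` shows that a positive eigenvector `ζ` of `M`
has eigenvalue `ρ`, and a suitable `t > 0` makes `f = ζ - t φ` an eigenvector for `ρ` with
`⟪f, φ*⟫ = 0`. If `f ≠ 0`, both `f⁺` and `f⁻` are nonzero, so positivity improvement makes the
inequality `|M f| ≤ M |f|` strict almost everywhere; then `M |f| - ρ |f|` is positive yet
orthogonal to `φ*`, which is impossible. The adjoint case follows because `M*` is again
positivity improving and `M** = M`.
-/

section

variable {E : Type*} [NormedAddCommGroup E] [InnerProductSpace ℝ E] [CompleteSpace E]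

theorem eigenvalue_eq_of_inner_adjoint_eigenvector_ne_zero {N : E →L[ℝ] E} {ζ η : E} {lam ρ : ℝ}
    (hζ : N ζ = lam • ζ) (hη : ContinuousLinearMap.adjoint N η = ρ • η) (h : ⟪ζ, η⟫ ≠ 0) :
    lam = ρ :=
  mul_right_cancel₀ h <| by
    rw [← real_inner_smul_left, ← hζ, ← ContinuousLinearMap.adjoint_inner_right, hη,
      real_inner_smul_right]

end

namespace MeasureTheory

variable {X : Type*} [MeasurableSpace X] {μ : Measure X}

theorem Lp.ne_zero_of_ae_pos [NeZero μ] {f : Lp ℝ 2 μ} (hf : ∀ᵐ x ∂μ, 0 < f x) : f ≠ 0 := by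
  rintro rfl
  obtain ⟨x, hx, hx0⟩ := (hf.and (Lp.coeFn_zero ℝ 2 μ)).exists
  exact hx.ne' hx0

theorem L2.inner_pos_of_ae_nonneg_of_ae_pos {f g : Lp ℝ 2 μ} (hf : ∀ᵐ x ∂μ, 0 ≤ f x)
    (hf0 : f ≠ 0) (hg : ∀ᵐ x ∂μ, 0 < g x) : 0 < ⟪f, g⟫ := by
  have hfg : 0 ≤ᵐ[μ] fun x => f x * g x := by
    filter_upwards [hf, hg] with x hfx hgx using mul_nonneg hfx hgx.le
  have hint : Integrable (fun x => f x * g x) μ := by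
    simpa [mul_comm] using L2.integrable_inner (𝕜 := ℝ) f g
  rw [L2.inner_def]
  simp only [RCLike.inner_apply, conj_trivial, mul_comm (g _)]
  refine (integral_nonneg_of_ae hfg).lt_of_ne fun h => hf0 ?_
  rw [Lp.eq_zero_iff_ae_eq_zero]
  filter_upwards [(integral_eq_zero_iff_of_nonneg_ae hfg hint).1 h.symm, hg] with x hfgx hgx
  exact (mul_eq_zero.1 hfgx).resolve_right hgx.ne'

theorem L2.ae_pos_of_forall_inner_pos [IsFiniteMeasure μ] (g : Lp ℝ 2 μ)
    (h : ∀ χ : Lp ℝ 2 μ, (∀ᵐ x ∂μ, 0 ≤ χ x) → χ ≠ 0 → 0 < ⟪χ, g⟫) : ∀ᵐ x ∂μ, 0 < g x := by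
  set s := {x | g x ≤ 0}
  have hs : MeasurableSet s :=
    measurableSet_le (Lp.stronglyMeasurable g).measurable measurable_const
  suffices μ s = 0 by
    filter_upwards [measure_eq_zero_iff_ae_notMem.1 this] with x hx using not_le.1 hx
  by_contra hμs
  set χ := indicatorConstLp 2 hs (measure_ne_top μ s) (1 : ℝ)
  have hχ : ∀ᵐ x ∂μ, 0 ≤ χ x := indicatorConstLp_coeFn.mono fun x hx =>
    hx ▸ Set.indicator_nonneg (fun _ _ => zero_le_one) x
  have hχ0 : χ ≠ 0 := by
    intro h0
    have := congrArg norm h0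
    rw [norm_indicatorConstLp two_ne_zero ENNReal.ofNat_ne_top, norm_zero] at this
    simp [measureReal_def, ENNReal.toReal_eq_zero_iff, hμs, measure_ne_top μ s] at this
  have hpos := h χ hχ hχ0
  rw [L2.inner_indicatorConstLp_one] at hpos
  exact hpos.not_ge (setIntegral_nonpos hs fun x hx => hx)

def IsPositivityImproving (M : Lp ℝ 2 μ →L[ℝ] Lp ℝ 2 μ) : Prop :=
  ∀ ψ : Lp ℝ 2 μ, (∀ᵐ x ∂μ, 0 ≤ ψ x) → ψ ≠ 0 → ∀ᵐ x ∂μ, 0 < (M ψ) x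

theorem Lp.posPart_ne_zero_of_inner_eq_zero {f g : Lp ℝ 2 μ} (hf : f ≠ 0)
    (hg : ∀ᵐ x ∂μ, 0 < g x) (hfg : ⟪f, g⟫ = 0) : f⁺ ≠ 0 := by
  rw [Ne, posPart_eq_zero]
  intro hle
  have hpos := L2.inner_pos_of_ae_nonneg_of_ae_pos ((Lp.coeFn_nonneg _).2 (neg_nonneg.2 hle))
    (neg_ne_zero.2 hf) hg
  rw [inner_neg_left, hfg, neg_zero] at hpos
  exact hpos.false

theorem Lp.negPart_ne_zero_of_inner_eq_zero {f g : Lp ℝ 2 μ} (hf : f ≠ 0)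
    (hg : ∀ᵐ x ∂μ, 0 < g x) (hfg : ⟪f, g⟫ = 0) : f⁻ ≠ 0 := by
  rw [← posPart_neg]
  exact posPart_ne_zero_of_inner_eq_zero (neg_ne_zero.2 hf) hg
    (by rw [inner_neg_left, hfg, neg_zero])

namespace IsPositivityImproving

variable {M : Lp ℝ 2 μ →L[ℝ] Lp ℝ 2 μ}

theorem adjoint [IsFiniteMeasure μ] (hM : IsPositivityImproving M) :
    IsPositivityImproving (ContinuousLinearMap.adjoint M) := fun ψ hψ hψ0 =>
  L2.ae_pos_of_forall_inner_pos _ fun χ hχ hχ0 => by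
    rw [ContinuousLinearMap.adjoint_inner_right, real_inner_comm]
    exact L2.inner_pos_of_ae_nonneg_of_ae_pos hψ hψ0 (hM χ hχ hχ0)

theorem abs_apply_lt_apply_abs (hM : IsPositivityImproving M) {f : Lp ℝ 2 μ} (hp : f⁺ ≠ 0)
    (hn : f⁻ ≠ 0) : ∀ᵐ x ∂μ, |M f x| < M |f| x := by
  have hMp := hM f⁺ ((Lp.coeFn_nonneg _).2 (posPart_nonneg f)) hp
  have hMn := hM f⁻ ((Lp.coeFn_nonneg _).2 (negPart_nonneg f)) hn
  rw [← posPart_add_negPart f, map_add]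
  nth_rewrite 1 [← posPart_sub_negPart f]
  rw [map_sub]
  filter_upwards [Lp.coeFn_add (M f⁺) (M f⁻), Lp.coeFn_sub (M f⁺) (M f⁻), hMp, hMn]
    with x hadd hsub hpx hnx
  rw [hadd, hsub, Pi.add_apply, Pi.sub_apply]
  exact abs_sub_lt_iff.2 ⟨by linarith, by linarith⟩

theorem eq_zero_of_inner_eq_zero [NeZero μ] (hM : IsPositivityImproving M) {ρ : ℝ} (hρ : 0 < ρ)
    {f η : Lp ℝ 2 μ} (hf : M f = ρ • f) (hη : ∀ᵐ x ∂μ, 0 < η x)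
    (hηeig : ContinuousLinearMap.adjoint M η = ρ • η) (hfη : ⟪f, η⟫ = 0) : f = 0 := by
  by_contra hf0
  have hlt := hM.abs_apply_lt_apply_abs (Lp.posPart_ne_zero_of_inner_eq_zero hf0 hη hfη)
    (Lp.negPart_ne_zero_of_inner_eq_zero hf0 hη hfη)
  set D := M |f| - ρ • |f|
  have hD : ∀ᵐ x ∂μ, 0 < D x := by
    filter_upwards [hlt, Lp.coeFn_sub (M |f|) (ρ • |f|), Lp.coeFn_smul ρ |f|, Lp.coeFn_abs f,
      hf ▸ Lp.coeFn_smul ρ f] with x hltx hsub hsmul habs hfx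
    rw [hsub, Pi.sub_apply, hsmul, Pi.smul_apply, habs, smul_eq_mul]
    rw [hfx, Pi.smul_apply, smul_eq_mul, abs_mul, abs_of_pos hρ] at hltx
    linarith
  have hDη : ⟪D, η⟫ = 0 := by
    rw [inner_sub_left, real_inner_smul_left, ← ContinuousLinearMap.adjoint_inner_right, hηeig,
      real_inner_smul_right, sub_self]
  exact (L2.inner_pos_of_ae_nonneg_of_ae_pos (hD.mono fun _ h => h.le) (Lp.ne_zero_of_ae_pos hD)
    hη).ne' hDη

theorem unique_pos_eigenvector [NeZero μ] (hM : IsPositivityImproving M) {ρ : ℝ} (hρ : 0 < ρ)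
    {η η' : Lp ℝ 2 μ} (hη : ∀ᵐ x ∂μ, 0 < η x) (hη' : ∀ᵐ x ∂μ, 0 < η' x) (heig : M η = ρ • η)
    (heig' : ContinuousLinearMap.adjoint M η' = ρ • η') {ζ : Lp ℝ 2 μ} {lam : ℝ}
    (hζ : ∀ᵐ x ∂μ, 0 < ζ x) (hζeig : M ζ = lam • ζ) :
    lam = ρ ∧ ∃ s : ℝ, 0 < s ∧ ζ = s • η := by
  have hζη' := L2.inner_pos_of_ae_nonneg_of_ae_pos (hζ.mono fun _ h => h.le)
    (Lp.ne_zero_of_ae_pos hζ) hη'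
  have hηη' := L2.inner_pos_of_ae_nonneg_of_ae_pos (hη.mono fun _ h => h.le)
    (Lp.ne_zero_of_ae_pos hη) hη'
  obtain rfl := eigenvalue_eq_of_inner_adjoint_eigenvector_ne_zero hζeig heig' hζη'.ne'
  refine ⟨rfl, ⟪ζ, η'⟫ / ⟪η, η'⟫, div_pos hζη' hηη', sub_eq_zero.1 <|
    hM.eq_zero_of_inner_eq_zero hρ ?_ hη' heig' ?_⟩
  · rw [map_sub, map_smul, hζeig, heig, smul_comm, smul_sub]
  · rw [inner_sub_left, real_inner_smul_left, div_mul_cancel₀ _ hηη'.ne', sub_self]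

end IsPositivityImproving

end MeasureTheory

/-- **Proposition A.1.** Let `M` be a bounded linear operator on `L²(Q)` that is positivity
improving.  Suppose there exist a scalar `ρ > 0` and positive functions `φ, φ* ∈ L²` with
`Mφ = ρφ` and `M*φ* = ρφ*`.  Then `φ` and `φ*` are the unique positive eigenfunctions of `M`
and `M*` up to (positive) scale. -/
theorem stmt_0
    {X : Type*} [MeasurableSpace X] (μ : Measure X) [IsProbabilityMeasure μ]
    (M : Lp ℝ 2 μ →L[ℝ] Lp ℝ 2 μ)
    (hM : ∀ ψ : Lp ℝ 2 μ, (∀ᵐ x ∂μ, 0 ≤ ψ x) → ψ ≠ 0 → ∀ᵐ x ∂μ, 0 < (M ψ) x)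
    (ρ : ℝ) (hρ : 0 < ρ)
    (φ φstar : Lp ℝ 2 μ)
    (hφ : ∀ᵐ x ∂μ, 0 < φ x) (hφstar : ∀ᵐ x ∂μ, 0 < φstar x)
    (heig : M φ = ρ • φ)
    (heigstar : ContinuousLinearMap.adjoint M φstar = ρ • φstar) :
    (∀ ζ : Lp ℝ 2 μ, ∀ lam : ℝ, (∀ᵐ x ∂μ, 0 < ζ x) → M ζ = lam • ζ →
      lam = ρ ∧ ∃ s : ℝ, 0 < s ∧ ζ = s • φ) ∧
    (∀ ζ : Lp ℝ 2 μ, ∀ lam : ℝ, (∀ᵐ x ∂μ, 0 < ζ x) →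
      ContinuousLinearMap.adjoint M ζ = lam • ζ →
      lam = ρ ∧ ∃ s : ℝ, 0 < s ∧ ζ = s • φstar) := by
  have hM' : IsPositivityImproving M := hM
  refine ⟨fun ζ lam hζ hζeig => hM'.unique_pos_eigenvector hρ hφ hφstar heig heigstar hζ hζeig,
    fun ζ lam hζ hζeig => hM'.adjoint.unique_pos_eigenvector hρ hφstar hφ heigstar ?_ hζ hζeig⟩
  rwa [ContinuousLinearMap.adjoint_adjoint]
end

section
/- Let μ be a probability measure, L² = L²(μ) the real Hilbert space of square-integrable functions, and β ∈ (0,1). Let G be a bounded linear operator on L² that is positivity improving, and define T : L² → L² by Tψ = G(|ψ|^β), where |ψ|^β denotes the μ-a.e. pointwise function x ↦ |ψ(x)|^β (which lies in L² since μ is a probability measure and β < 1). Suppose h ∈ L² is a fixed point of T that is not μ-a.e. zero, and T is Fréchet differentiable at h with derivative D_h satisfying r(D_h) = limₙ ‖D_hⁿ‖^{1/n} < 1. Let χ = h/‖h‖. Then there exist finite constants C > 0 and b ∈ (0,1) and a neighborhood N of χ in L² such that for every initial point ψ = a·f with a ∈ ℝ, a ≠ 0 and f ∈ N, the iteration χ₁(ψ)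 = ψ, χ_{n+1}(ψ) = Tχₙ(ψ)/‖Tχₙ(ψ)‖ is well defined (each ‖Tχₙ(ψ)‖ > 0) and satisfies ‖χ_{n+1}(ψ) − χ‖ ≤ C bⁿ for all n ≥ 1. (Proposition 2 of the paper: local convergence of the normalized iteration for the nonlinear Perron-Frobenius problem.) -/
/-!
`T` is positively homogeneous of degree `β`, `T (c • ψ) = |c| ^ β • T ψ`, and normalization
ignores positive factors, so the normalized iterates of `a • f` are the normalizations of the plain
iterates `T^[n] (‖h‖ • f)`, whose starting point is close to `h` when `f` is close to
`χ = ‖h‖⁻¹ • h`. Since `r(D_h) < 1` there are `b < 1` and `m` with `‖D_h ^ m‖ < b ^ m`, so near `h`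
the block `T^[m]` contracts towards `h` by `b ^ m`, while one step of `T` expands distances to `h`
by at most `‖D_h‖ + 1`. Hence `T^[n] ψ → h` at rate `b ^ n`, and normalization is Lipschitz near
`h ≠ 0`.
-/

open MeasureTheory Filter

/-- The normalized iteration `χ₁(ψ) = ψ`, `χ_{n+1}(ψ) = Tχₙ(ψ)/‖Tχₙ(ψ)‖`
(so `normIter T ψ n = χ_{n+1}(ψ)`). -/
noncomputable def normIter {E : Type*} [NormedAddCommGroup E] [NormedSpace ℝ E]
    (T : E → E) (ψ : E) : ℕ → E
  | 0 => ψ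
  | n + 1 => ‖T (normIter T ψ n)‖⁻¹ • T (normIter T ψ n)

open Topology NormedSpace

theorem NormedSpace.norm_normalize_sub_normalize_le {V : Type*} [NormedAddCommGroup V]
    [NormedSpace ℝ V] (x : V) {y : V} (hy : y ≠ 0) :
    ‖normalize x - normalize y‖ ≤ 2 * ‖x - y‖ / ‖y‖ := by
  have hy' : 0 < ‖y‖ := norm_pos_iff.2 hy
  have hsplit : normalize x - normalize y = ‖y‖⁻¹ • (x - y) + (‖x‖⁻¹ - ‖y‖⁻¹) • x := by
    simp only [normalize, smul_sub, sub_smul]; abel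
  have hradial : ‖(‖x‖⁻¹ - ‖y‖⁻¹) • x‖ ≤ ‖x - y‖ / ‖y‖ := by
    rcases eq_or_ne x 0 with rfl | hx
    · simp only [smul_zero, norm_zero]; positivity
    have hx' : 0 < ‖x‖ := norm_pos_iff.2 hx
    have hscalar : (‖x‖⁻¹ - ‖y‖⁻¹) * ‖x‖ = (‖y‖ - ‖x‖) / ‖y‖ := by field_simp
    calc ‖(‖x‖⁻¹ - ‖y‖⁻¹) • x‖ = |‖y‖ - ‖x‖| / ‖y‖ := by
          rw [norm_smul, Real.norm_eq_abs, ← abs_norm x, ← abs_mul, abs_norm, hscalar, abs_div,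
            abs_of_pos hy']
      _ ≤ ‖x - y‖ / ‖y‖ := by
          gcongr
          rw [norm_sub_rev]
          exact abs_norm_sub_norm_le y x
  calc ‖normalize x - normalize y‖
      ≤ ‖‖y‖⁻¹ • (x - y)‖ + ‖(‖x‖⁻¹ - ‖y‖⁻¹) • x‖ := hsplit ▸ norm_add_le _ _
    _ ≤ ‖x - y‖ / ‖y‖ + ‖x - y‖ / ‖y‖ := by
        gcongr
        rw [norm_smul, norm_inv, norm_norm, inv_mul_eq_div]
    _ = 2 * ‖x - y‖ / ‖y‖ := by ring

theorem exists_pos_lt_pow_of_tendsto_rpow_inv {u : ℕ → ℝ} (hu : ∀ n, 0 ≤ u n) {r b : ℝ}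
    (hlim : Tendsto (fun n : ℕ => u n ^ (1 / (n : ℝ))) atTop (𝓝 r)) (hrb : r < b) :
    ∃ m, 0 < m ∧ u m < b ^ m := by
  obtain ⟨m, hm, hm0⟩ := ((hlim.eventually_lt_const hrb).and (eventually_gt_atTop 0)).exists
  refine ⟨m, hm0, ?_⟩
  have := pow_lt_pow_left₀ hm (Real.rpow_nonneg (hu m) _) hm0.ne'
  rwa [one_div, Real.rpow_inv_natCast_pow (hu m) hm0.ne'] at this

theorem HasFDerivAt.eventually_norm_sub_le {𝕜 E F : Type*} [NontriviallyNormedField 𝕜]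
    [NormedAddCommGroup E] [NormedSpace 𝕜 E] [NormedAddCommGroup F] [NormedSpace 𝕜 F]
    {f : E → F} {f' : E →L[𝕜] F} {x : E} (hf : HasFDerivAt f f' x) {c : ℝ} (hc : ‖f'‖ < c) :
    ∀ᶠ y in 𝓝 x, ‖f y - f x‖ ≤ c * ‖y - x‖ := by
  filter_upwards [hf.isLittleO.def (sub_pos.2 hc)] with y hy
  calc ‖f y - f x‖ = ‖(f y - f x - f' (y - x)) + f' (y - x)‖ := by rw [sub_add_cancel]
    _ ≤ (c - ‖f'‖) * ‖y - x‖ + ‖f'‖ * ‖y - x‖ :=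
        (norm_add_le _ _).trans (add_le_add hy (f'.le_opNorm _))
    _ = c * ‖y - x‖ := by ring

section Iterate

variable {X : Type*} [PseudoMetricSpace X] {h : X}

theorem dist_iterate_le_pow_mul {S : X → X} {ρ c : ℝ} (hc : 0 ≤ c)
    (hS : ∀ x, dist x h < ρ → dist (S x) h ≤ c * dist x h) (x : X) :
    ∀ k, (∀ j < k, c ^ j * dist x h < ρ) → dist (S^[k] x) h ≤ c ^ k * dist x h
  | 0, _ => by simp
  | k + 1, hρ => by
    have ih := dist_iterate_le_pow_mul hc hS x k fun j hj => hρ j (hj.trans k.lt_succ_self)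
    rw [Function.iterate_succ_apply', pow_succ', mul_assoc]
    exact (hS _ (ih.trans_lt (hρ k k.lt_succ_self))).trans (by gcongr)

/-- Writing `n = m q + s` with `s < m`, `T^[n]` is `q` contracting blocks `T^[m]` followed by
`s` expanding steps of `T`. -/
theorem eventually_dist_iterate_le {T : X → X} {m : ℕ} (hm : 0 < m) {b L : ℝ} (hb0 : 0 < b)
    (hb1 : b ≤ 1) (hL : 1 ≤ L) (hT : ∀ᶠ x in 𝓝 h, dist (T x) h ≤ L * dist x h)
    (hTm : ∀ᶠ x in 𝓝 h, dist (T^[m] x) h ≤ b ^ m * dist x h) :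
    ∀ᶠ x in 𝓝 h, ∀ n, dist (T^[n] x) h ≤ (L / b) ^ m * b ^ n * dist x h := by
  obtain ⟨ρ, hρ, hρT⟩ := Metric.eventually_nhds_iff.1 (hT.and hTm)
  have hLm : 1 ≤ L ^ m := one_le_pow₀ hL
  filter_upwards [Metric.eventually_nhds_iff.2 ⟨ρ / L ^ m, by positivity, fun x hx => hx⟩]
    with x hx n
  set d := dist x h
  have hd : L ^ m * d < ρ := by rwa [lt_div_iff₀ (by positivity), mul_comm] at hx
  have hdρ : d < ρ := lt_of_le_of_lt (le_mul_of_one_le_left dist_nonneg hLm) hd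
  have hbm : b ^ m ≤ 1 := pow_le_one₀ hb0.le hb1
  set q := n / m
  have hy : dist (T^[m * q] x) h ≤ (b ^ m) ^ q * d := by
    rw [Function.iterate_mul]
    refine dist_iterate_le_pow_mul (by positivity) (fun z hz => (hρT hz).2) x q fun j _ => ?_
    exact lt_of_le_of_lt (mul_le_of_le_one_left dist_nonneg (pow_le_one₀ (by positivity) hbm)) hdρ
  have hyd : dist (T^[m * q] x) h ≤ d :=
    hy.trans (mul_le_of_le_one_left dist_nonneg (pow_le_one₀ (by positivity) hbm))
  have hs : n % m < m := Nat.mod_lt n hm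
  have htail : dist (T^[n % m] (T^[m * q] x)) h ≤ L ^ (n % m) * dist (T^[m * q] x) h := by
    refine dist_iterate_le_pow_mul (by positivity) (fun z hz => (hρT hz).1) _ _ fun j hj => ?_
    calc L ^ j * dist (T^[m * q] x) h ≤ L ^ m * d :=
          mul_le_mul (pow_le_pow_right₀ hL (hj.trans hs).le) hyd dist_nonneg (by positivity)
      _ < ρ := hd
  have hrate : L ^ (n % m) * (b ^ m) ^ q ≤ (L / b) ^ m * b ^ n := by
    have hbs : 1 ≤ b ^ (n % m) / b ^ m :=
      (one_le_div (by positivity)).2 (pow_le_pow_of_le_one hb0.le hb1 hs.le)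
    have hbn : b ^ n = (b ^ m) ^ q * b ^ (n % m) := by rw [← pow_mul, ← pow_add, Nat.div_add_mod]
    calc L ^ (n % m) * (b ^ m) ^ q ≤ L ^ m * ((b ^ m) ^ q * (b ^ (n % m) / b ^ m)) :=
          mul_le_mul (pow_le_pow_right₀ hL hs.le) (le_mul_of_one_le_right (by positivity) hbs)
            (by positivity) (by positivity)
      _ = (L / b) ^ m * b ^ n := by
          rw [hbn, div_pow]
          field_simp
  rw [show T^[n] x = T^[n % m] (T^[m * q] x) by rw [← Function.iterate_add_apply, Nat.mod_add_div]]
  calc dist (T^[n % m] (T^[m * q] x)) h ≤ L ^ (n % m) * ((b ^ m) ^ q * d) :=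
        htail.trans (mul_le_mul_of_nonneg_left hy (by positivity))
    _ ≤ (L / b) ^ m * b ^ n * d := by
        rw [← mul_assoc]; exact mul_le_mul_of_nonneg_right hrate dist_nonneg

end Iterate

theorem HasFDerivAt.eventually_norm_iterate_sub_le {𝕜 E : Type*} [NontriviallyNormedField 𝕜]
    [NormedAddCommGroup E] [NormedSpace 𝕜 E] {T : E → E} {D : E →L[𝕜] E} {h : E}
    (hT : HasFDerivAt T D h) (hfix : T h = h) {r : ℝ} (hr : r < 1)
    (hlim : Tendsto (fun n : ℕ => ‖D ^ n‖ ^ (1 / (n : ℝ))) atTop (𝓝 r)) :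
    ∃ b, 0 < b ∧ b < 1 ∧ ∃ K, 0 < K ∧
      ∀ᶠ ψ in 𝓝 h, ∀ n, ‖T^[n] ψ - h‖ ≤ K * b ^ n * ‖ψ - h‖ := by
  obtain ⟨b, hrb, hb0, hb1⟩ : ∃ b, r < b ∧ 0 < b ∧ b < 1 :=
    ⟨(max r 0 + 1) / 2, by linarith [le_max_left r 0], by positivity, by linarith [max_lt hr one_pos]⟩
  obtain ⟨m, hm, hDm⟩ := exists_pos_lt_pow_of_tendsto_rpow_inv (fun n => norm_nonneg _) hlim hrb
  have hstep := hT.eventually_norm_sub_le (lt_add_one ‖D‖)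
  have hblock := (hT.iterate hfix m).eventually_norm_sub_le hDm
  rw [hfix] at hstep
  rw [Function.iterate_fixed hfix] at hblock
  simp_rw [← dist_eq_norm] at hstep hblock
  refine ⟨b, hb0, hb1, ((‖D‖ + 1) / b) ^ m, by positivity, ?_⟩
  simpa only [dist_eq_norm] using
    eventually_dist_iterate_le hm hb0 hb1.le (le_add_of_nonneg_left (norm_nonneg D)) hstep hblock

section Homogeneous

variable {E : Type*} [NormedAddCommGroup E] [NormedSpace ℝ E] {T : E → E} {β : ℝ}

theorem normIter_smul_eq_smul_iterate (hT : ∀ (c : ℝ) x, T (c • x) = |c| ^ β • T x) {a : ℝ}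
    (ha : a ≠ 0) (f : E) : ∀ n, ∃ s ≠ (0 : ℝ), normIter T (a • f) n = s • T^[n] f
  | 0 => ⟨a, ha, rfl⟩
  | n + 1 => by
    obtain ⟨s, hs, e⟩ := normIter_smul_eq_smul_iterate hT ha f n
    rw [normIter, e, hT, ← Function.iterate_succ_apply' T n f]
    rcases eq_or_ne (T^[n + 1] f) 0 with hz | hz
    · exact ⟨1, one_ne_zero, by simp [hz]⟩
    have hsβ : 0 < |s| ^ β := Real.rpow_pos_of_pos (abs_pos.2 hs) β
    refine ⟨‖|s| ^ β • T^[n + 1] f‖⁻¹ * |s| ^ β, ?_, smul_smul _ _ _⟩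
    exact mul_ne_zero (inv_ne_zero (norm_ne_zero_iff.2 (smul_ne_zero hsβ.ne' hz))) hsβ.ne'

theorem normIter_smul_succ (hT : ∀ (c : ℝ) x, T (c • x) = |c| ^ β • T x) {a : ℝ} (ha : a ≠ 0)
    (f : E) (n : ℕ) : normIter T (a • f) (n + 1) = normalize (T^[n + 1] f) := by
  obtain ⟨s, hs, e⟩ := normIter_smul_eq_smul_iterate hT ha f n
  change normalize (T (normIter T (a • f) n)) = _
  rw [e, hT, ← Function.iterate_succ_apply' T n f]
  exact normalize_smul_of_pos (Real.rpow_pos_of_pos (abs_pos.2 hs) β) _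

theorem norm_apply_normIter_smul_pos (hT : ∀ (c : ℝ) x, T (c • x) = |c| ^ β • T x) {a : ℝ}
    (ha : a ≠ 0) {f : E} {n : ℕ} (hf : T^[n + 1] f ≠ 0) : 0 < ‖T (normIter T (a • f) n)‖ := by
  obtain ⟨s, hs, e⟩ := normIter_smul_eq_smul_iterate hT ha f n
  rw [e, hT, ← Function.iterate_succ_apply' T n f, norm_smul]
  exact mul_pos (norm_pos_iff.2 (Real.rpow_pos_of_pos (abs_pos.2 hs) β).ne') (norm_pos_iff.2 hf)

theorem exists_nhds_normIter_smul_sub_normalize_le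
    (hT : ∀ (c : ℝ) x, T (c • x) = |c| ^ β • T x) {h : E} (hne : h ≠ 0) {b K : ℝ} (hb0 : 0 < b)
    (hb1 : b < 1) (hK : 0 < K)
    (hconv : ∀ᶠ ψ in 𝓝 h, ∀ n, ‖T^[n] ψ - h‖ ≤ K * b ^ n * ‖ψ - h‖) :
    ∃ N ∈ 𝓝 (normalize h), ∀ a : ℝ, a ≠ 0 → ∀ f ∈ N,
      (∀ n, 0 < ‖T (normIter T (a • f) n)‖) ∧
      ∀ n, 1 ≤ n → ‖normIter T (a • f) n - normalize h‖ ≤ 2 * b ^ n := by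
  have hh : 0 < ‖h‖ := norm_pos_iff.2 hne
  have hscale : Tendsto (‖h‖ • ·) (𝓝 (normalize h)) (𝓝 h) := by
    simpa only [norm_smul_normalize] using (continuous_const_smul ‖h‖).tendsto (normalize h)
  refine ⟨_, hscale (inter_mem hconv (Metric.ball_mem_nhds h (div_pos hh hK))),
    fun a ha f hf => ?_⟩
  obtain ⟨hψ, hψh⟩ : (∀ n, ‖T^[n] (‖h‖ • f) - h‖ ≤ K * b ^ n * ‖‖h‖ • f - h‖) ∧
      K * ‖‖h‖ • f - h‖ < ‖h‖ := ⟨hf.1, by simpa [dist_eq_norm, lt_div_iff₀' hK] using hf.2⟩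
  have hclose (n : ℕ) : ‖T^[n] (‖h‖ • f) - h‖ < ‖h‖ :=
    calc _ ≤ b ^ n * (K * ‖‖h‖ • f - h‖) := by linarith [hψ n]
      _ ≤ K * ‖‖h‖ • f - h‖ := mul_le_of_le_one_left (by positivity) (pow_le_one₀ hb0.le hb1.le)
      _ < ‖h‖ := hψh
  have hiter_ne (n : ℕ) : T^[n] (‖h‖ • f) ≠ 0 := fun h0 => by
    simpa [h0] using hclose n
  have ha' : a / ‖h‖ ≠ 0 := div_ne_zero ha hh.ne'
  rw [show a • f = (a / ‖h‖) • ‖h‖ • f by rw [smul_smul, div_mul_cancel₀ _ hh.ne']]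
  refine ⟨fun n => norm_apply_normIter_smul_pos hT ha' (hiter_ne _), fun n hn => ?_⟩
  obtain ⟨k, rfl⟩ := Nat.exists_eq_add_of_le' hn
  rw [normIter_smul_succ hT ha']
  calc ‖normalize (T^[k + 1] (‖h‖ • f)) - normalize h‖
      ≤ 2 * ‖T^[k + 1] (‖h‖ • f) - h‖ / ‖h‖ := norm_normalize_sub_normalize_le _ hne
    _ ≤ 2 * (b ^ (k + 1) * (K * ‖‖h‖ • f - h‖)) / ‖h‖ := by
        gcongr; linarith [hψ (k + 1)]
    _ ≤ 2 * b ^ (k + 1) := by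
        rw [div_le_iff₀ hh, mul_assoc]
        gcongr

end Homogeneous

section Lp

variable {X : Type*} [MeasurableSpace X] {μ : Measure X} [IsFiniteMeasure μ]
  {p : ENNReal} {β : ℝ}

theorem MeasureTheory.MemLp.abs_rpow_of_le_one {f : X → ℝ} (hf : MemLp f p μ) (hβ0 : 0 ≤ β)
    (hβ1 : β ≤ 1) : MemLp (fun x => |f x| ^ β) p μ := by
  have h := hf.norm_rpow_div (ENNReal.ofReal β)
  rw [ENNReal.toReal_ofReal hβ0] at h
  refine h.mono_exponent ?_
  calc p = p / 1 := (div_one p).symm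
    _ ≤ p / ENNReal.ofReal β := ENNReal.div_le_div_left (ENNReal.ofReal_le_one.2 hβ1) p

theorem apply_smul_eq_abs_rpow_smul [Fact (1 ≤ p)] {F : Type*} [NormedAddCommGroup F]
    [NormedSpace ℝ F] (hβ0 : 0 ≤ β) (hβ1 : β ≤ 1) (G : Lp ℝ p μ →L[ℝ] F) {T : Lp ℝ p μ → F}
    (hT : ∀ ψ g : Lp ℝ p μ, (∀ᵐ x ∂μ, g x = |ψ x| ^ β) → T ψ = G g) (c : ℝ) (ψ : Lp ℝ p μ) :
    T (c • ψ) = |c| ^ β • T ψ := by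
  have hmem := (Lp.memLp ψ).abs_rpow_of_le_one hβ0 hβ1
  have hg := hmem.coeFn_toLp
  rw [hT ψ _ hg, ← G.map_smul]
  refine hT _ _ ?_
  filter_upwards [hg, Lp.coeFn_smul c ψ, Lp.coeFn_smul (|c| ^ β) (hmem.toLp _)] with x hx hcψ hcg
  rw [hcg, hcψ, Pi.smul_apply, Pi.smul_apply, hx, smul_eq_mul, smul_eq_mul, abs_mul,
    Real.mul_rpow (abs_nonneg _) (abs_nonneg _)]

end Lp

theorem stmt_7_general
    {X : Type*} [MeasurableSpace X] (μ : Measure X) [IsProbabilityMeasure μ]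
    (β : ℝ) (hβ0 : 0 < β) (hβ1 : β < 1)
    (G : Lp ℝ 2 μ →L[ℝ] Lp ℝ 2 μ)
    (T : Lp ℝ 2 μ → Lp ℝ 2 μ)
    (hT : ∀ ψ g : Lp ℝ 2 μ, (∀ᵐ x ∂μ, g x = |ψ x| ^ β) → T ψ = G g)
    (h : Lp ℝ 2 μ) (hfix : T h = h) (hne : h ≠ 0)
    (Dh : Lp ℝ 2 μ →L[ℝ] Lp ℝ 2 μ) (hdiff : HasFDerivAt T Dh h)
    (hr : ∃ r : ℝ, r < 1 ∧
      Tendsto (fun n : ℕ => ‖Dh ^ n‖ ^ (1 / (n : ℝ))) atTop (nhds r)) :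
    ∃ C : ℝ, 0 < C ∧ ∃ b : ℝ, 0 < b ∧ b < 1 ∧ ∃ N ∈ nhds (‖h‖⁻¹ • h),
      ∀ a : ℝ, a ≠ 0 → ∀ f ∈ N,
        (∀ n : ℕ, 0 < ‖T (normIter T (a • f) n)‖) ∧
        (∀ n : ℕ, 1 ≤ n → ‖normIter T (a • f) n - ‖h‖⁻¹ • h‖ ≤ C * b ^ n) := by
  obtain ⟨r, hr, hlim⟩ := hr
  obtain ⟨b, hb0, hb1, K, hK, hconv⟩ := hdiff.eventually_norm_iterate_sub_le hfix hr hlim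
  obtain ⟨N, hN, hiter⟩ := exists_nhds_normIter_smul_sub_normalize_le
    (apply_smul_eq_abs_rpow_smul hβ0.le hβ1.le G hT) hne hb0 hb1 hK hconv
  exact ⟨2, two_pos, b, hb0, hb1, N, hN, hiter⟩

/-- **Proposition 2.** Let `μ` be a probability measure, `β ∈ (0,1)`, `G` a positivity
improving bounded linear operator on `L²(μ)`, and `T ψ = G(|ψ|^β)`.  If `h ∈ L²` is a nonzero
fixed point of `T` and `T` is Fréchet differentiable at `h` with `r(D_h) < 1`, then, with
`χ = h/‖h‖`, there are `C > 0`, `b ∈ (0,1)` and a neighborhood `N` of `χ` such that for every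
initial point `ψ = a·f` with `a ≠ 0`, `f ∈ N`, the normalized iteration is well defined and
`‖χ_{n+1}(ψ) − χ‖ ≤ C bⁿ` for all `n ≥ 1`. -/
theorem stmt_7
    {X : Type*} [MeasurableSpace X] (μ : Measure X) [IsProbabilityMeasure μ]
    (β : ℝ) (hβ0 : 0 < β) (hβ1 : β < 1)
    (G : Lp ℝ 2 μ →L[ℝ] Lp ℝ 2 μ)
    (hG : ∀ ψ : Lp ℝ 2 μ, (∀ᵐ x ∂μ, 0 ≤ ψ x) → ψ ≠ 0 → ∀ᵐ x ∂μ, 0 < (G ψ) x)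
    (T : Lp ℝ 2 μ → Lp ℝ 2 μ)
    (hT : ∀ ψ g : Lp ℝ 2 μ, (∀ᵐ x ∂μ, g x = |ψ x| ^ β) → T ψ = G g)
    (h : Lp ℝ 2 μ) (hfix : T h = h) (hne : h ≠ 0)
    (Dh : Lp ℝ 2 μ →L[ℝ] Lp ℝ 2 μ) (hdiff : HasFDerivAt T Dh h)
    (hr : ∃ r : ℝ, r < 1 ∧
      Tendsto (fun n : ℕ => ‖Dh ^ n‖ ^ (1 / (n : ℝ))) atTop (nhds r)) :
    ∃ C : ℝ, 0 < C ∧ ∃ b : ℝ, 0 < b ∧ b < 1 ∧ ∃ N ∈ nhds (‖h‖⁻¹ • h),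
      ∀ a : ℝ, a ≠ 0 → ∀ f ∈ N,
        (∀ n : ℕ, 0 < ‖T (normIter T (a • f) n)‖) ∧
        (∀ n : ℕ, 1 ≤ n → ‖normIter T (a • f) n - ‖h‖⁻¹ • h‖ ≤ C * b ^ n) :=
  stmt_7_general μ β hβ0 hβ1 G T hT h hfix hne Dh hdiff hr
end

section
/- Let E be a real Banach space, T : E → E a map, and h ∈ E with Th = h. Suppose (i) there exist constants K ≥ 0 and β ∈ (0,1) such that ‖Tψ₁ − Tψ₂‖ ≤ K‖ψ₁ − ψ₂‖^β for all ψ₁, ψ₂ ∈ E, and (ii) T is Fréchet differentiable at h with derivative D_h satisfying r(D_h) = limₙ ‖D_hⁿ‖^{1/n} < 1. Then there exist finite constants C > 0 and b ∈ (0,1) and ε > 0 such that ‖Tⁿψ − h‖ ≤ C bⁿ for every n ≥ 1 and every ψ ∈ E with ‖ψ − h‖ < ε. (Lemma C.1 (lem:fpiter) of the paper; in the paper's setting T = G∘|·|^β satisfies (i) with K = ‖G‖.) -/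
open Filter

set_option maxHeartbeats 1000000 in
/-- **Lemma C.1 (lem:fpiter).** Let `E` be a real Banach space, `T : E → E` with `Th = h`.
If (i) `‖Tψ₁ − Tψ₂‖ ≤ K‖ψ₁ − ψ₂‖^β` for all `ψ₁, ψ₂` with `K ≥ 0`, `β ∈ (0,1)`, and
(ii) `T` is Fréchet differentiable at `h` with `r(D_h) = limₙ ‖D_hⁿ‖^{1/n} < 1`, then there
are `C > 0`, `b ∈ (0,1)`, `ε > 0` with `‖Tⁿψ − h‖ ≤ C bⁿ` for all `n ≥ 1` and all `ψ` with
`‖ψ − h‖ < ε`. -/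
theorem stmt_8 {E : Type*} [NormedAddCommGroup E] [NormedSpace ℝ E] [CompleteSpace E]
    (T : E → E) (h : E) (hfix : T h = h)
    (K β : ℝ) (hK : 0 ≤ K) (hβ0 : 0 < β) (hβ1 : β < 1)
    (hHolder : ∀ ψ₁ ψ₂ : E, ‖T ψ₁ - T ψ₂‖ ≤ K * ‖ψ₁ - ψ₂‖ ^ β)
    (Dh : E →L[ℝ] E) (hdiff : HasFDerivAt T Dh h)
    (hr : ∃ r : ℝ, r < 1 ∧
      Tendsto (fun n : ℕ => ‖Dh ^ n‖ ^ (1 / (n : ℝ))) atTop (nhds r)) :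
    ∃ C : ℝ, 0 < C ∧ ∃ b : ℝ, 0 < b ∧ b < 1 ∧ ∃ ε : ℝ, 0 < ε ∧
      ∀ n : ℕ, 1 ≤ n → ∀ ψ : E, ‖ψ - h‖ < ε → ‖T^[n] ψ - h‖ ≤ C * b ^ n := by
  obtain ⟨r, hr1, hrt⟩ := hr
  have hr0 : 0 ≤ r :=
    ge_of_tendsto hrt (Eventually.of_forall fun n => Real.rpow_nonneg (norm_nonneg _) _)
  set b₀ : ℝ := (r + 1) / 2 with hb₀def
  have hb₀0 : 0 < b₀ := by rw [hb₀def]; linarith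
  have hb₀1 : b₀ < 1 := by rw [hb₀def]; linarith
  have hrb₀ : r < b₀ := by rw [hb₀def]; linarith
  -- pick N with ‖Dh^N‖ < b₀^N
  obtain ⟨N, hNlt, hN1⟩ := ((hrt.eventually_lt_const hrb₀).and (eventually_ge_atTop 1)).exists
  have hNpos : 0 < N := hN1
  have hDN : ‖Dh ^ N‖ < b₀ ^ N := by
    calc ‖Dh ^ N‖ = ((‖Dh ^ N‖ ^ (1 / (N : ℝ))) : ℝ) ^ N := by
          rw [← Real.rpow_natCast (‖Dh ^ N‖ ^ (1 / (N : ℝ))),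
            ← Real.rpow_mul (norm_nonneg _), one_div,
            inv_mul_cancel₀ (by exact_mod_cast hNpos.ne'), Real.rpow_one]
      _ < b₀ ^ N :=
          pow_lt_pow_left₀ hNlt (Real.rpow_nonneg (norm_nonneg _) _) hNpos.ne'
  -- contraction constant c for T^[N]
  set δ : ℝ := (b₀ ^ N - ‖Dh ^ N‖) / 2 with hδdef
  have hδ : 0 < δ := by rw [hδdef]; linarith
  set c : ℝ := ‖Dh ^ N‖ + δ with hcdef
  have hc0 : 0 < c := by rw [hcdef]; positivity
  have hcb : c < b₀ ^ N := by rw [hcdef, hδdef]; linarith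
  have hb₀N1 : b₀ ^ N < 1 := pow_lt_one₀ hb₀0.le hb₀1 hNpos.ne'
  have hc1 : c < 1 := hcb.trans hb₀N1
  -- differentiability of the iterates
  have hiter : ∀ n, T^[n] h = h := fun n => Function.iterate_fixed hfix n
  have hderiv : ∀ n : ℕ, HasFDerivAt (T^[n]) (Dh ^ n) h := by
    intro n
    induction n with
    | zero => simpa [ContinuousLinearMap.one_def] using hasFDerivAt_id h
    | succ n ih =>
      rw [Function.iterate_succ', pow_succ']
      exact HasFDerivAt.comp h (by rw [hiter n]; exact hdiff) ih
  -- contraction estimate for T^[N] near h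
  obtain ⟨ε₀, hε₀, hball⟩ : ∃ ε₀ > 0, ∀ ψ : E, ‖ψ - h‖ < ε₀ →
      ‖T^[N] ψ - T^[N] h - (Dh ^ N) (ψ - h)‖ ≤ δ * ‖ψ - h‖ := by
    have hloδ := (hderiv N).isLittleO.def hδ
    rw [Metric.eventually_nhds_iff] at hloδ
    obtain ⟨ε₀, hε₀, hball⟩ := hloδ
    exact ⟨ε₀, hε₀, fun ψ hψ => by simpa using hball (by rwa [dist_eq_norm])⟩
  have hcontr : ∀ ψ : E, ‖ψ - h‖ < ε₀ → ‖T^[N] ψ - h‖ ≤ c * ‖ψ - h‖ := by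
    intro ψ hψ
    have h1 := hball ψ hψ
    rw [hiter N] at h1
    have h2 : ‖T^[N] ψ - h‖ ≤ ‖(Dh ^ N) (ψ - h)‖ + δ * ‖ψ - h‖ := by
      have h3 := norm_add_le (T^[N] ψ - h - (Dh ^ N) (ψ - h)) ((Dh ^ N) (ψ - h))
      rw [sub_add_cancel] at h3
      linarith
    have h4 : ‖(Dh ^ N) (ψ - h)‖ ≤ ‖Dh ^ N‖ * ‖ψ - h‖ := (Dh ^ N).le_opNorm _
    rw [hcdef]; nlinarith [norm_nonneg (ψ - h)]
  -- iterate the contraction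
  set ε : ℝ := min ε₀ 1 with hεdef
  have hε : 0 < ε := lt_min hε₀ one_pos
  have hε1 : ε ≤ 1 := min_le_right _ _
  have hSm : ∀ ψ : E, ‖ψ - h‖ < ε → ∀ m : ℕ,
      ‖(T^[N])^[m] ψ - h‖ ≤ c ^ m * ‖ψ - h‖ ∧ ‖(T^[N])^[m] ψ - h‖ < ε := by
    intro ψ hψ m
    induction m with
    | zero =>
      simp only [Function.iterate_zero, id_eq, pow_zero, one_mul]
      exact ⟨le_rfl, hψ⟩
    | succ m ih =>
      obtain ⟨ih1, ih2⟩ := ih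
      have hlt : ‖(T^[N])^[m] ψ - h‖ < ε₀ := lt_of_lt_of_le ih2 (min_le_left _ _)
      have hct := hcontr _ hlt
      rw [Function.iterate_succ_apply']
      constructor
      · calc ‖T^[N] ((T^[N])^[m] ψ) - h‖ ≤ c * ‖(T^[N])^[m] ψ - h‖ := hct
          _ ≤ c * (c ^ m * ‖ψ - h‖) := mul_le_mul_of_nonneg_left ih1 hc0.le
          _ = c ^ (m + 1) * ‖ψ - h‖ := by ring
      · calc ‖T^[N] ((T^[N])^[m] ψ) - h‖ ≤ c * ‖(T^[N])^[m] ψ - h‖ := hct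
          _ < c * ε := by exact mul_lt_mul_of_pos_left ih2 hc0
          _ ≤ 1 * ε := mul_le_mul_of_nonneg_right hc1.le hε.le
          _ = ε := one_mul _
  -- Hölder chain for the first few iterates
  have hchain : ∀ k : ℕ, ∀ φ : E, ‖T^[k] φ - h‖ ≤ (1 + K) ^ (k + 1) * ‖φ - h‖ ^ (β ^ k) := by
    intro k
    induction k with
    | zero =>
      intro φ
      simp only [Function.iterate_zero, id_eq, pow_zero, Real.rpow_one, zero_add, pow_one]
      nlinarith [norm_nonneg (φ - h)]
    | succ k ih =>
      intro φ
      rw [Function.iterate_succ_apply']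
      have x0 : (0:ℝ) ≤ ‖φ - h‖ := norm_nonneg _
      have h1 : ‖T (T^[k] φ) - h‖ ≤ K * ‖T^[k] φ - h‖ ^ β := by
        have := hHolder (T^[k] φ) h; rwa [hfix] at this
      have h2 : ‖T^[k] φ - h‖ ^ β ≤ ((1+K)^(k+1) * ‖φ - h‖ ^ (β ^ k)) ^ β :=
        Real.rpow_le_rpow (norm_nonneg _) (ih φ) hβ0.le
      have h3 : ((1+K)^(k+1) * ‖φ - h‖ ^ (β ^ k)) ^ β
          = ((1+K)^(k+1) : ℝ) ^ β * ‖φ - h‖ ^ (β ^ (k+1)) := by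
        rw [Real.mul_rpow (by positivity) (Real.rpow_nonneg x0 _),
          ← Real.rpow_natCast (1+K) (k+1)]
        rw [← Real.rpow_mul x0, ← pow_succ, Real.rpow_natCast]
      have hx1 : (1:ℝ) ≤ (1+K)^(k+1) := one_le_pow₀ (by linarith)
      have h5 : ((1+K)^(k+1) : ℝ) ^ β ≤ (1+K)^(k+1) := by
        calc ((1+K)^(k+1) : ℝ) ^ β ≤ ((1+K)^(k+1) : ℝ) ^ (1:ℝ) :=
              Real.rpow_le_rpow_of_exponent_le hx1 hβ1.le
          _ = (1+K)^(k+1) := Real.rpow_one _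
      have hy : (0:ℝ) ≤ ‖φ - h‖ ^ (β ^ (k+1)) := Real.rpow_nonneg x0 _
      calc ‖T (T^[k] φ) - h‖ ≤ K * ‖T^[k] φ - h‖ ^ β := h1
        _ ≤ K * (((1+K)^(k+1) : ℝ) ^ β * ‖φ - h‖ ^ (β ^ (k+1))) := by
            rw [← h3]; exact mul_le_mul_of_nonneg_left h2 hK
        _ ≤ (1+K) * ((1+K)^(k+1) * ‖φ - h‖ ^ (β ^ (k+1))) := by
            apply mul_le_mul (by linarith) (mul_le_mul_of_nonneg_right h5 hy)
              (by positivity) (by linarith)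
        _ = (1+K)^(k+2) * ‖φ - h‖ ^ (β ^ (k+1)) := by ring
  -- final constants
  set γ : ℝ := c ^ (β ^ N) with hγdef
  have hγ0 : 0 < γ := Real.rpow_pos_of_pos hc0 _
  have hγ1 : γ < 1 := Real.rpow_lt_one hc0.le hc1 (pow_pos hβ0 N)
  set b : ℝ := γ ^ ((1 : ℝ) / (2 * N)) with hbdef
  have hb0 : 0 < b := Real.rpow_pos_of_pos hγ0 _
  have h2N : (0:ℝ) < 2 * N := by positivity
  have hb1 : b < 1 := Real.rpow_lt_one hγ0.le hγ1 (by positivity)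
  refine ⟨(1 + K) ^ N * γ⁻¹, by positivity, b, hb0, hb1, ε, hε, ?_⟩
  intro n hn ψ hψ
  -- split n = k + N * m
  set m : ℕ := n / N with hmdef
  set k : ℕ := n % N with hkdef
  have hkN : k < N := Nat.mod_lt _ hNpos
  have hnmk : n = k + N * m := by rw [hmdef, hkdef, add_comm]; exact (Nat.div_add_mod n N).symm
  have hsplit : T^[n] ψ = T^[k] ((T^[N])^[m] ψ) := by
    rw [hnmk, Function.iterate_add_apply, Function.iterate_mul]
  obtain ⟨hS1, _⟩ := hSm ψ hψ m
  have hx : ‖(T^[N])^[m] ψ - h‖ ≤ c ^ m := by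
    calc ‖(T^[N])^[m] ψ - h‖ ≤ c ^ m * ‖ψ - h‖ := hS1
      _ ≤ c ^ m * 1 := mul_le_mul_of_nonneg_left (le_of_lt (lt_of_lt_of_le hψ hε1))
          (pow_nonneg hc0.le m)
      _ = c ^ m := mul_one _
  -- the key chain of inequalities
  have hmain : ‖T^[k] ((T^[N])^[m] ψ) - h‖ ≤ (1 + K) ^ N * γ ^ m := by
    have h1 := hchain k ((T^[N])^[m] ψ)
    have h2 : ‖(T^[N])^[m] ψ - h‖ ^ (β ^ k) ≤ (c ^ m : ℝ) ^ (β ^ k) :=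
      Real.rpow_le_rpow (norm_nonneg _) hx (pow_nonneg hβ0.le k)
    have h3 : (c ^ m : ℝ) ^ (β ^ k) ≤ γ ^ m := by
      rw [← Real.rpow_natCast c m, ← Real.rpow_mul hc0.le,
        hγdef, ← Real.rpow_natCast (c ^ (β ^ N)) m, ← Real.rpow_mul hc0.le]
      apply Real.rpow_le_rpow_of_exponent_ge hc0 hc1.le
      have hβkN : β ^ N ≤ β ^ k := pow_le_pow_of_le_one hβ0.le hβ1.le hkN.le
      have : (0:ℝ) ≤ (m:ℝ) := Nat.cast_nonneg m
      nlinarith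
    have hKN : ((1 + K) ^ (k + 1) : ℝ) ≤ (1 + K) ^ N :=
      pow_le_pow_right₀ (by linarith) hkN
    calc ‖T^[k] ((T^[N])^[m] ψ) - h‖ ≤ (1 + K) ^ (k + 1) * ‖(T^[N])^[m] ψ - h‖ ^ (β ^ k) := h1
      _ ≤ (1 + K) ^ (k + 1) * (γ ^ m) := by
          apply mul_le_mul_of_nonneg_left (h2.trans h3) (by positivity)
      _ ≤ (1 + K) ^ N * γ ^ m := mul_le_mul_of_nonneg_right hKN (by positivity)
  -- compare γ^m with b^n
  have hcmp : γ ^ m ≤ γ⁻¹ * b ^ n := by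
    have hnle : (n : ℝ) * (1 / (2 * N)) ≤ (m : ℝ) + 1 := by
      rw [mul_one_div, div_le_iff₀ h2N]
      have hlt : n < N * (m + 1) := by rw [hnmk, Nat.mul_succ]; omega
      have h' : (n : ℝ) ≤ (N : ℝ) * ((m : ℝ) + 1) := by exact_mod_cast hlt.le
      nlinarith [Nat.cast_nonneg (α := ℝ) N, Nat.cast_nonneg (α := ℝ) m]
    have hbn : (b : ℝ) ^ n = γ ^ ((n : ℝ) * (1 / (2 * N))) := by
      rw [hbdef, ← Real.rpow_natCast (γ ^ ((1:ℝ)/(2*N))) n, ← Real.rpow_mul hγ0.le,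
        mul_comm]
    have hle : γ ^ (m : ℝ) * γ ≤ γ ^ ((n : ℝ) * (1 / (2 * N))) := by
      have h2 := Real.rpow_le_rpow_of_exponent_ge hγ0 hγ1.le hnle
      rwa [Real.rpow_add hγ0, Real.rpow_one] at h2
    rw [Real.rpow_natCast] at hle
    calc γ ^ m = γ⁻¹ * (γ ^ m * γ) := by
          rw [mul_comm (γ ^ m) γ, ← mul_assoc, inv_mul_cancel₀ hγ0.ne', one_mul]
      _ ≤ γ⁻¹ * γ ^ ((n : ℝ) * (1 / (2 * N))) :=
          mul_le_mul_of_nonneg_left hle (by positivity)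
      _ = γ⁻¹ * b ^ n := by rw [hbn]
  calc ‖T^[n] ψ - h‖ = ‖T^[k] ((T^[N])^[m] ψ) - h‖ := by rw [hsplit]
    _ ≤ (1 + K) ^ N * γ ^ m := hmain
    _ ≤ (1 + K) ^ N * (γ⁻¹ * b ^ n) := mul_le_mul_of_nonneg_left hcmp (by positivity)
    _ = (1 + K) ^ N * γ⁻¹ * b ^ n := by ring
end

section
/- Let E be a real Banach space, T : E → E a map, and h ∈ E with Th = h. Suppose (i) there exist constants K ≥ 0 and β ∈ (0,1) such that ‖Tψ₁ − Tψ₂‖ ≤ K‖ψ₁ − ψ₂‖^β for all ψ₁, ψ₂ ∈ E, and (ii) T is Fréchet differentiable at h with derivative D_h satisfying limₙ ‖D_hⁿ‖^{1/n} < 1. Then there exists ε > 0 such that h is the unique fixed point of T in the ball {ψ ∈ E : ‖ψ − h‖ < ε}: any h' with Th' = h' and ‖h' − h‖ < ε satisfies h' = h. (Corollary 3 of the paper: local identification of the fixed point of the nonlinear Perron-Frobenius operator.) -/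
/-!
Some power `Dₕⁿ` has operator norm `q < 1`, and `h` is a fixed point of `Tⁿ` with derivative
`Dₕⁿ` there. Near `h`, every fixed point `h'` of `T`, hence of `Tⁿ`, satisfies
`‖h' - h‖ = ‖Tⁿ h' - Tⁿ h‖ ≤ (q + o(1)) ‖h' - h‖`, which forces `h' = h`.
-/

open Filter Function Topology

lemma exists_norm_pow_lt_one_of_tendsto {R : Type*} [SeminormedRing R] {a : R} {r : ℝ}
    (hr : r < 1) (ha : Tendsto (fun n : ℕ => ‖a ^ n‖ ^ (1 / (n : ℝ))) atTop (𝓝 r)) :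
    ∃ n : ℕ, ‖a ^ n‖ < 1 := by
  obtain ⟨n, hn⟩ := (ha.eventually (gt_mem_nhds hr)).exists
  refine ⟨n, not_le.mp fun h1 => hn.not_ge ?_⟩
  exact Real.one_le_rpow h1 (by positivity)

lemma HasFDerivAt.eventually_isFixedPt_imp_eq {𝕜 E : Type*} [NontriviallyNormedField 𝕜]
    [NormedAddCommGroup E] [NormedSpace 𝕜 E] {f : E → E} {L : E →L[𝕜] E} {a : E}
    (hf : HasFDerivAt f L a) (ha : IsFixedPt f a) (hL : ‖L‖ < 1) :
    ∀ᶠ x in 𝓝 a, IsFixedPt f x → x = a := by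
  have hc : 0 < (1 - ‖L‖) / 2 := by linarith
  filter_upwards [hf.isLittleO.def hc] with x hx hfx
  rw [hfx, ha.eq] at hx
  have hbound : ‖x - a‖ ≤ ((1 - ‖L‖) / 2 + ‖L‖) * ‖x - a‖ :=
    calc ‖x - a‖ = ‖(x - a - L (x - a)) + L (x - a)‖ := by rw [sub_add_cancel]
      _ ≤ ‖x - a - L (x - a)‖ + ‖L (x - a)‖ := norm_add_le _ _
      _ ≤ (1 - ‖L‖) / 2 * ‖x - a‖ + ‖L‖ * ‖x - a‖ := add_le_add hx (L.le_opNorm _)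
      _ = ((1 - ‖L‖) / 2 + ‖L‖) * ‖x - a‖ := by ring
  have hzero : ‖x - a‖ = 0 := by nlinarith [norm_nonneg (x - a)]
  rwa [norm_eq_zero, sub_eq_zero] at hzero

theorem stmt_9_general {E : Type*} [NormedAddCommGroup E] [NormedSpace ℝ E]
    (T : E → E) (h : E) (hfix : T h = h)
    (Dh : E →L[ℝ] E) (hdiff : HasFDerivAt T Dh h)
    (hr : ∃ r : ℝ, r < 1 ∧
      Tendsto (fun n : ℕ => ‖Dh ^ n‖ ^ (1 / (n : ℝ))) atTop (nhds r)) :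
    ∃ ε : ℝ, 0 < ε ∧ ∀ h' : E, T h' = h' → ‖h' - h‖ < ε → h' = h := by
  obtain ⟨r, hr1, htend⟩ := hr
  obtain ⟨n, hn⟩ := exists_norm_pow_lt_one_of_tendsto hr1 htend
  have hiso := (hdiff.iterate hfix n).eventually_isFixedPt_imp_eq (IsFixedPt.iterate hfix n) hn
  obtain ⟨ε, hε, hball⟩ := Metric.eventually_nhds_iff.mp hiso
  exact ⟨ε, hε, fun h' hfix' hlt =>
    hball (by rwa [dist_eq_norm]) (IsFixedPt.iterate hfix' n)⟩

/-- **Corollary 3.** Let `E` be a real Banach space, `T : E → E` with `Th = h`.  If (i)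
`‖Tψ₁ − Tψ₂‖ ≤ K‖ψ₁ − ψ₂‖^β` for all `ψ₁, ψ₂` with `K ≥ 0`, `β ∈ (0,1)`, and (ii) `T` is
Fréchet differentiable at `h` with `limₙ ‖D_hⁿ‖^{1/n} < 1`, then `h` is the unique fixed
point of `T` in some ball `{ψ : ‖ψ − h‖ < ε}`. -/
theorem stmt_9 {E : Type*} [NormedAddCommGroup E] [NormedSpace ℝ E] [CompleteSpace E]
    (T : E → E) (h : E) (hfix : T h = h)
    (K β : ℝ) (hK : 0 ≤ K) (hβ0 : 0 < β) (hβ1 : β < 1)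
    (hHolder : ∀ ψ₁ ψ₂ : E, ‖T ψ₁ - T ψ₂‖ ≤ K * ‖ψ₁ - ψ₂‖ ^ β)
    (Dh : E →L[ℝ] E) (hdiff : HasFDerivAt T Dh h)
    (hr : ∃ r : ℝ, r < 1 ∧
      Tendsto (fun n : ℕ => ‖Dh ^ n‖ ^ (1 / (n : ℝ))) atTop (nhds r)) :
    ∃ ε : ℝ, 0 < ε ∧ ∀ h' : E, T h' = h' → ‖h' - h‖ < ε → h' = h :=
  stmt_9_general T h hfix Dh hdiff hr
end

section
/- Let E be a normed vector space and T : E → E a map such that ‖Tψ₁ − Tψ₂‖ ≤ K‖ψ₁ − ψ₂‖^β for all ψ₁, ψ₂ ∈ E, where K ≥ 0 and β ∈ (0,1). Then for every integer n ≥ 1 and all ψ₁, ψ₂ ∈ E, ‖Tⁿψ₁ − Tⁿψ₂‖ ≤ (1+K)^{1/(1−β)} ‖ψ₁ − ψ₂‖^{βⁿ}. (Display (lem:fpiter:2) in the proof of Lemma C.1: uniform Hölder bound on the iterates of a β-Hölder map, established by induction.) -/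
/-! The constant `C = (1+K)^{1/(1-β)}` is the fixed point of `C ↦ (1+K) C^β`, so `K C^β ≤ C`.
Hence the bound `C ‖ψ₁ - ψ₂‖^{βⁿ}` for `Tⁿ` is reproduced for `Tⁿ⁺¹` by one application of the
Hölder estimate, and the induction closes with the same constant at every step. -/

open Real

theorem dist_iterate_le_of_holder {X : Type*} [PseudoMetricSpace X] {T : X → X} {K β C : ℝ}
    (hK : 0 ≤ K) (hβ : 0 ≤ β) (hT : ∀ x y, dist (T x) (T y) ≤ K * dist x y ^ β)
    (hKC : K ≤ C) (hKCβ : K * C ^ β ≤ C) :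
    ∀ n : ℕ, 1 ≤ n → ∀ x y, dist (T^[n] x) (T^[n] y) ≤ C * dist x y ^ (β ^ n) := by
  intro n hn
  induction n, hn using Nat.le_induction with
  | base =>
    intro x y
    simpa only [Function.iterate_one, pow_one] using
      (hT x y).trans (mul_le_mul_of_nonneg_right hKC (rpow_nonneg dist_nonneg _))
  | succ n _ ih =>
    intro x y
    calc dist (T^[n + 1] x) (T^[n + 1] y)
        = dist (T (T^[n] x)) (T (T^[n] y)) := by
          rw [Function.iterate_succ_apply', Function.iterate_succ_apply']
      _ ≤ K * dist (T^[n] x) (T^[n] y) ^ β := hT _ _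
      _ ≤ K * (C * dist x y ^ (β ^ n)) ^ β := by
          gcongr
          exact ih x y
      _ = K * C ^ β * dist x y ^ (β ^ (n + 1)) := by
          rw [mul_rpow (hK.trans hKC) (rpow_nonneg dist_nonneg _), ← rpow_mul dist_nonneg,
            ← pow_succ, mul_assoc]
      _ ≤ C * dist x y ^ (β ^ (n + 1)) := by
          gcongr

theorem mul_rpow_rpow_one_div_one_sub {a β : ℝ} (ha : 0 < a) (hβ : β ≠ 1) :
    a * (a ^ ((1 : ℝ) / (1 - β))) ^ β = a ^ ((1 : ℝ) / (1 - β)) := by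
  have h1β : 1 - β ≠ 0 := sub_ne_zero.mpr hβ.symm
  rw [← rpow_mul ha.le, ← rpow_one_add' ha.le]
  · congr 1
    field_simp
    ring
  · field_simp
    simp [h1β]

theorem stmt_10_general {E : Type*} [NormedAddCommGroup E]
    (T : E → E) (K β : ℝ) (hK : 0 ≤ K) (hβ0 : 0 < β) (hβ1 : β < 1)
    (hHolder : ∀ ψ₁ ψ₂ : E, ‖T ψ₁ - T ψ₂‖ ≤ K * ‖ψ₁ - ψ₂‖ ^ β) :
    ∀ n : ℕ, 1 ≤ n → ∀ ψ₁ ψ₂ : E,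
      ‖T^[n] ψ₁ - T^[n] ψ₂‖ ≤ (1 + K) ^ ((1 : ℝ) / (1 - β)) * ‖ψ₁ - ψ₂‖ ^ (β ^ n) := by
  set C := (1 + K) ^ ((1 : ℝ) / (1 - β))
  have hC : K ≤ C :=
    (le_add_of_nonneg_left zero_le_one).trans <| self_le_rpow_of_one_le (by linarith) <| by
      rw [le_div_iff₀ (by linarith)]
      linarith
  have hCβ : K * C ^ β ≤ C :=
    calc K * C ^ β ≤ (1 + K) * C ^ β := by gcongr; linarith
      _ = C := mul_rpow_rpow_one_div_one_sub (by linarith) hβ1.ne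
  intro n hn ψ₁ ψ₂
  simpa only [dist_eq_norm] using
    dist_iterate_le_of_holder hK hβ0.le (by simpa only [dist_eq_norm] using hHolder) hC hCβ n hn
      ψ₁ ψ₂

/-- Display (lem:fpiter:2) in the proof of Lemma C.1: if `T` is `β`-Hölder with constant `K`
on a normed vector space (`K ≥ 0`, `β ∈ (0,1)`), then for every `n ≥ 1`,
`‖Tⁿψ₁ − Tⁿψ₂‖ ≤ (1+K)^{1/(1−β)} ‖ψ₁ − ψ₂‖^{βⁿ}`. -/
theorem stmt_10 {E : Type*} [NormedAddCommGroup E] [NormedSpace ℝ E]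
    (T : E → E) (K β : ℝ) (hK : 0 ≤ K) (hβ0 : 0 < β) (hβ1 : β < 1)
    (hHolder : ∀ ψ₁ ψ₂ : E, ‖T ψ₁ - T ψ₂‖ ≤ K * ‖ψ₁ - ψ₂‖ ^ β) :
    ∀ n : ℕ, 1 ≤ n → ∀ ψ₁ ψ₂ : E,
      ‖T^[n] ψ₁ - T^[n] ψ₂‖ ≤ (1 + K) ^ ((1 : ℝ) / (1 - β)) * ‖ψ₁ - ψ₂‖ ^ (β ^ n) :=
  stmt_10_general T K β hK hβ0 hβ1 hHolder
end

section
/- Let E be a real Banach space, T : E → E a map, and h ∈ E with Th = h. Suppose: (i) T is Fréchet differentiable at every point of some open neighborhood of h, and the derivative map g ↦ D_g is continuous at h in operator norm; (ii) limₙ ‖D_hⁿ‖^{1/n} < 1; (iii) (Πₖ)ₖ is a sequence of continuous linear idempotent operators on E with ‖Πₖ‖ ≤ 1 for all k, ‖ΠₖD_h − D_h‖ → 0, ‖Πₖh − h‖ → 0, and ‖Πₖ(Tψ) − Tψ‖ → 0 as k → ∞ for every ψ ∈ E. Then there exist an integer K and ε > 0 such that for every k ≥ K the projected fixed-point equation Πₖ(Tx)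 = x has a unique solution hₖ in the ball {x ∈ E : ‖x − h‖ ≤ ε}; moreover ‖hₖ − h‖ → 0 as k → ∞. (Lemma B.5 (lem:fp:exist) of the paper: existence, local uniqueness, and consistency of the projected solution in the sieve/projection method for nonlinear fixed points.) -/
/-! For `r(D_h) < ρ < 1` the adapted norm `p x = ⨆ₙ ‖D_hⁿ x‖ / ρⁿ` is equivalent to `‖·‖` and
makes `D_h` a `ρ`-contraction. Near `h` the derivative `Πₖ D_g` of `Πₖ ∘ T` is `η`-close to `D_h`
once `k` is large, so by the mean value theorem `Πₖ ∘ T` is a `(ρ + Cη)`-contraction for `p` on a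
small ball around `h`, which it moves by only `‖Πₖ h - h‖`. The contraction principle gives the
unique solution `hₖ` there, with `‖hₖ - h‖ ≤ C ‖Πₖ h - h‖ / (1 - ρ - Cη) → 0`. -/

open Filter Set Metric Topology

theorem exists_norm_pow_le_mul_pow {R : Type*} [SeminormedRing R] {a : R} {r ρ : ℝ}
    (ha : Tendsto (fun n : ℕ => ‖a ^ n‖ ^ (1 / (n : ℝ))) atTop (𝓝 r)) (hrρ : r < ρ) :
    ∃ C, 0 < C ∧ ∀ n, ‖a ^ n‖ ≤ C * ρ ^ n := by
  have hρ : 0 < ρ := (ge_of_tendsto' ha fun n => by positivity).trans_lt hrρ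
  have hbig : (fun n => ‖a ^ n‖) =O[cofinite] (fun n => ρ ^ n) := by
    rw [Nat.cofinite_eq_atTop]
    refine Asymptotics.IsBigO.of_bound 1 ?_
    filter_upwards [ha.eventually_lt_const hrρ, eventually_ne_atTop 0] with n hn hn0
    rw [norm_norm, Real.norm_of_nonneg (pow_pos hρ n).le, one_mul]
    calc ‖a ^ n‖ = (‖a ^ n‖ ^ (1 / (n : ℝ))) ^ n := by
          rw [one_div, Real.rpow_inv_natCast_pow (norm_nonneg _) hn0]
      _ ≤ ρ ^ n := by gcongr
  obtain ⟨C, hC⟩ :=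
    (Asymptotics.isBigO_cofinite_iff fun n h => absurd h (pow_pos hρ n).ne').mp hbig
  refine ⟨max C 1, by positivity, fun n => ?_⟩
  calc ‖a ^ n‖ ≤ C * ρ ^ n := by
        simpa only [norm_norm, Real.norm_of_nonneg (pow_pos hρ n).le] using hC n
    _ ≤ max C 1 * ρ ^ n := by gcongr; exact le_max_left _ _

theorem ContinuousLinearMap.norm_comp_sub_le_of_norm_le_one {𝕜 E F : Type*}
    [NontriviallyNormedField 𝕜] [SeminormedAddCommGroup E] [NormedSpace 𝕜 E]
    [SeminormedAddCommGroup F] [NormedSpace 𝕜 F] {P : F →L[𝕜] F} {A B : E →L[𝕜] F}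
    (hP : ‖P‖ ≤ 1) : ‖P.comp B - A‖ ≤ ‖B - A‖ + ‖P.comp A - A‖ := by
  have hsplit : P.comp B - A = P.comp (B - A) + (P.comp A - A) := by
    rw [ContinuousLinearMap.comp_sub]; abel
  calc ‖P.comp B - A‖ ≤ ‖P.comp (B - A)‖ + ‖P.comp A - A‖ := hsplit ▸ norm_add_le _ _
    _ ≤ ‖B - A‖ + ‖P.comp A - A‖ := by
        gcongr
        exact (P.opNorm_comp_le _).trans (mul_le_of_le_one_left (norm_nonneg _) hP)

section SeminormContraction

variable {E : Type*} [NormedAddCommGroup E] [NormedSpace ℝ E] {p : Seminorm ℝ E} {C q : ℝ}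
  {F : E → E} {s : Set E}

theorem Seminorm.continuous_of_le_mul_norm (hpC : ∀ x, p x ≤ C * ‖x‖) : Continuous p := by
  refine Seminorm.continuous_of_continuousAt_zero ?_
  rw [ContinuousAt, map_zero]
  refine squeeze_zero (fun x => apply_nonneg p x) hpC ?_
  simpa using (continuous_norm.tendsto (0 : E)).const_mul C

theorem eq_of_seminorm_contraction (hp : ∀ x, ‖x‖ ≤ p x) (hq : q < 1)
    (hF : ∀ x ∈ s, ∀ y ∈ s, p (F x - F y) ≤ q * p (x - y)) {x y : E} (hx : x ∈ s) (hy : y ∈ s)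
    (hFx : F x = x) (hFy : F y = y) : x = y := by
  have hxy : p (x - y) ≤ q * p (x - y) := by simpa only [hFx, hFy] using hF x hx y hy
  have : p (x - y) ≤ 0 := by nlinarith [apply_nonneg p (x - y)]
  exact sub_eq_zero.mp (norm_le_zero_iff.mp ((hp _).trans this))

theorem seminorm_sub_le_of_contraction (hF : ∀ x ∈ s, ∀ y ∈ s, p (F x - F y) ≤ q * p (x - y))
    {x c : E} (hx : x ∈ s) (hc : c ∈ s) (hFx : F x = x) :
    (1 - q) * p (x - c) ≤ p (F c - c) := by
  have : p (x - c) ≤ q * p (x - c) + p (F c - c) :=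
    calc p (x - c) = p ((F x - F c) + (F c - c)) := by rw [hFx, sub_add_sub_cancel]
      _ ≤ p (F x - F c) + p (F c - c) := map_add_le_add p _ _
      _ ≤ q * p (x - c) + p (F c - c) := by gcongr; exact hF x hx c hc
  linarith

theorem mapsTo_closedBall_of_seminorm_contraction (hq : 0 ≤ q)
    (hF : ∀ x ∈ s, ∀ y ∈ s, p (F x - F y) ≤ q * p (x - y)) {c : E} {ε : ℝ}
    (hs : p.closedBall c ε ⊆ s) (hc : p (F c - c) ≤ (1 - q) * ε) :
    MapsTo F (p.closedBall c ε) (p.closedBall c ε) := by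
  intro x hx
  rw [Seminorm.mem_closedBall] at hx ⊢
  have hcs : c ∈ s := hs (p.mem_closedBall_self ((apply_nonneg p _).trans hx))
  calc p (F x - c) ≤ p (F x - F c) + p (F c - c) := by
        simpa only [sub_add_sub_cancel] using map_add_le_add p (F x - F c) (F c - c)
    _ ≤ q * ε + (1 - q) * ε := by
        gcongr
        exact (hF x (hs hx) c hcs).trans (by gcongr)
    _ = ε := by ring

theorem exists_fixedPoint_of_seminorm_contraction [CompleteSpace E] (hp : ∀ x, ‖x‖ ≤ p x)
    (hpC : ∀ x, p x ≤ C * ‖x‖) (hq₀ : 0 ≤ q) (hq₁ : q < 1)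
    (hF : ∀ x ∈ s, ∀ y ∈ s, p (F x - F y) ≤ q * p (x - y)) (hs : IsClosed s)
    (hFs : MapsTo F s s) {x₀ : E} (hx₀ : x₀ ∈ s) : ∃ x ∈ s, F x = x := by
  set u : ℕ → E := fun n => F^[n] x₀
  have hu : ∀ n, u n ∈ s := fun n => hFs.iterate n hx₀
  have hu_succ : ∀ n, u (n + 1) = F (u n) := fun n => Function.iterate_succ_apply' F n x₀
  have hstep : ∀ n, p (u (n + 1) - u n) ≤ q ^ n * p (u 1 - u 0) := by
    intro n
    induction n with
    | zero => simp
    | succ n ih =>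
      calc p (u (n + 2) - u (n + 1)) = p (F (u (n + 1)) - F (u n)) := by
            rw [hu_succ (n + 1), hu_succ n]
        _ ≤ q * p (u (n + 1) - u n) := hF _ (hu _) _ (hu _)
        _ ≤ q * (q ^ n * p (u 1 - u 0)) := by gcongr
        _ = q ^ (n + 1) * p (u 1 - u 0) := by ring
  have hcauchy : CauchySeq u := by
    refine cauchySeq_of_le_geometric q (p (u 1 - u 0)) hq₁ fun n => ?_
    rw [dist_comm, dist_eq_norm, mul_comm]
    exact (hp _).trans (hstep n)
  obtain ⟨x, hx⟩ := cauchySeq_tendsto_of_complete hcauchy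
  have hxs : x ∈ s := hs.mem_of_tendsto hx (Eventually.of_forall hu)
  have hFx : Tendsto (fun n => F (u n)) atTop (𝓝 (F x)) := by
    rw [tendsto_iff_norm_sub_tendsto_zero] at hx ⊢
    refine squeeze_zero (fun n => norm_nonneg _) (fun n => ?_)
      (by simpa using hx.const_mul (q * C))
    calc ‖F (u n) - F x‖ ≤ q * p (u n - x) := (hp _).trans (hF _ (hu n) _ hxs)
      _ ≤ q * C * ‖u n - x‖ := by rw [mul_assoc]; gcongr; exact hpC _
  refine ⟨x, hxs, tendsto_nhds_unique hFx ?_⟩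
  have hshift : Tendsto (fun n => u (n + 1)) atTop (𝓝 x) := hx.comp (tendsto_add_atTop_nat 1)
  simpa only [hu_succ] using hshift

end SeminormContraction

section AdaptedSeminorm

variable {E : Type*} [NormedAddCommGroup E] [NormedSpace ℝ E] {A : E →L[ℝ] E} {ρ C : ℝ}

/-- Meaningful when `‖Aⁿ‖ = O(ρⁿ)`; otherwise the supremum of the unbounded family of seminorms is a
junk value. -/
noncomputable def adaptedSeminorm (A : E →L[ℝ] E) (ρ : ℝ) : Seminorm ℝ E :=
  ⨆ n : ℕ, (normSeminorm ℝ E).comp ((ρ ^ n)⁻¹ • A ^ n : E →L[ℝ] E).toLinearMap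

theorem norm_pow_apply_div_le (hρ : 0 < ρ) (hA : ∀ n, ‖A ^ n‖ ≤ C * ρ ^ n) (n : ℕ) (x : E) :
    ‖(A ^ n) x‖ / ρ ^ n ≤ C * ‖x‖ := by
  rw [div_le_iff₀ (pow_pos hρ n)]
  calc ‖(A ^ n) x‖ ≤ C * ρ ^ n * ‖x‖ := (A ^ n).le_of_opNorm_le (hA n) x
    _ = C * ‖x‖ * ρ ^ n := by ring

theorem bddAbove_range_norm_pow_apply_div (hρ : 0 < ρ) (hA : ∀ n, ‖A ^ n‖ ≤ C * ρ ^ n) (x : E) :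
    BddAbove (range fun n : ℕ => ‖(A ^ n) x‖ / ρ ^ n) :=
  ⟨C * ‖x‖, by rintro _ ⟨n, rfl⟩; exact norm_pow_apply_div_le hρ hA n x⟩

theorem adaptedSeminorm_apply (hρ : 0 < ρ) (hA : ∀ n, ‖A ^ n‖ ≤ C * ρ ^ n) (x : E) :
    adaptedSeminorm A ρ x = ⨆ n : ℕ, ‖(A ^ n) x‖ / ρ ^ n := by
  have hterm : ∀ (n : ℕ) (y : E),
      (normSeminorm ℝ E).comp ((ρ ^ n)⁻¹ • A ^ n : E →L[ℝ] E).toLinearMap y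
        = ‖(A ^ n) y‖ / ρ ^ n := fun n y => by
    rw [Seminorm.comp_apply, coe_normSeminorm, ContinuousLinearMap.coe_coe,
      smul_apply, norm_smul, norm_inv, norm_pow, Real.norm_of_nonneg hρ.le,
      inv_mul_eq_div]
  rw [adaptedSeminorm, Seminorm.iSup_apply]
  · simp only [hterm]
  rw [Seminorm.bddAbove_range_iff]
  intro y
  simpa only [hterm] using bddAbove_range_norm_pow_apply_div hρ hA y

theorem norm_le_adaptedSeminorm (hρ : 0 < ρ) (hA : ∀ n, ‖A ^ n‖ ≤ C * ρ ^ n) (x : E) :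
    ‖x‖ ≤ adaptedSeminorm A ρ x := by
  rw [adaptedSeminorm_apply hρ hA]
  have h₀ := le_ciSup (bddAbove_range_norm_pow_apply_div hρ hA x) 0
  rwa [pow_zero, pow_zero, div_one, one_apply_eq_self] at h₀

theorem adaptedSeminorm_le (hρ : 0 < ρ) (hA : ∀ n, ‖A ^ n‖ ≤ C * ρ ^ n) (x : E) :
    adaptedSeminorm A ρ x ≤ C * ‖x‖ := by
  rw [adaptedSeminorm_apply hρ hA]
  exact ciSup_le fun n => norm_pow_apply_div_le hρ hA n x

theorem adaptedSeminorm_image_le (hρ : 0 < ρ) (hA : ∀ n, ‖A ^ n‖ ≤ C * ρ ^ n) (x : E) :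
    adaptedSeminorm A ρ (A x) ≤ ρ * adaptedSeminorm A ρ x := by
  rw [adaptedSeminorm_apply hρ hA, adaptedSeminorm_apply hρ hA]
  refine ciSup_le fun n => ?_
  calc ‖(A ^ n) (A x)‖ / ρ ^ n = ρ * (‖(A ^ (n + 1)) x‖ / ρ ^ (n + 1)) := by
        rw [pow_succ, mul_apply_eq_comp, pow_succ]
        field_simp
    _ ≤ ρ * ⨆ n : ℕ, ‖(A ^ n) x‖ / ρ ^ n := by
        gcongr; exact le_ciSup (bddAbove_range_norm_pow_apply_div hρ hA x) (n + 1)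

theorem adaptedSeminorm_image_sub_le (hρ : 0 < ρ) (hA : ∀ n, ‖A ^ n‖ ≤ C * ρ ^ n)
    {F : E → E} {F' : E → E →L[ℝ] E} {s : Set E} {η : ℝ} (hs : Convex ℝ s)
    (hF : ∀ g ∈ s, HasFDerivWithinAt F (F' g) s g) (hF' : ∀ g ∈ s, ‖F' g - A‖ ≤ η)
    {x y : E} (hx : x ∈ s) (hy : y ∈ s) :
    adaptedSeminorm A ρ (F x - F y) ≤ (ρ + C * η) * adaptedSeminorm A ρ (x - y) := by
  set p := adaptedSeminorm A ρ
  have hC : 0 ≤ C := by simpa using (norm_nonneg _).trans (hA 0)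
  have hη : 0 ≤ η := (norm_nonneg _).trans (hF' x hx)
  have hmvt : ‖F x - F y - A (x - y)‖ ≤ η * ‖x - y‖ :=
    hs.norm_image_sub_le_of_norm_hasFDerivWithin_le' hF hF' hy hx
  calc p (F x - F y) = p (A (x - y) + (F x - F y - A (x - y))) := by rw [add_sub_cancel]
    _ ≤ p (A (x - y)) + p (F x - F y - A (x - y)) := map_add_le_add p _ _
    _ ≤ ρ * p (x - y) + C * (η * ‖x - y‖) := by
        gcongr
        · exact adaptedSeminorm_image_le hρ hA _
        · exact (adaptedSeminorm_le hρ hA _).trans (by gcongr)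
    _ ≤ ρ * p (x - y) + C * (η * p (x - y)) := by
        gcongr; exact norm_le_adaptedSeminorm hρ hA _
    _ = (ρ + C * η) * p (x - y) := by ring

end AdaptedSeminorm

theorem exists_fixedPoint_of_norm_fderiv_sub_le {E : Type*} [NormedAddCommGroup E]
    [NormedSpace ℝ E] [CompleteSpace E] {A : E →L[ℝ] E} {ρ C η ε : ℝ} (hρ : 0 < ρ)
    (hA : ∀ n, ‖A ^ n‖ ≤ C * ρ ^ n) (hq : ρ + C * η < 1) {F : E → E} {F' : E → E →L[ℝ] E}
    {c : E} (hF : ∀ g ∈ closedBall c ε, HasFDerivAt F (F' g) g)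
    (hF' : ∀ g ∈ closedBall c ε, ‖F' g - A‖ ≤ η)
    (hc : C * ‖F c - c‖ ≤ (1 - (ρ + C * η)) * ε) :
    ∃ x ∈ closedBall c ε, F x = x ∧ ‖x - c‖ ≤ C / (1 - (ρ + C * η)) * ‖F c - c‖ ∧
      ∀ y ∈ closedBall c ε, F y = y → y = x := by
  set q := ρ + C * η
  set p := adaptedSeminorm A ρ
  have hp := norm_le_adaptedSeminorm hρ hA
  have hpC := adaptedSeminorm_le hρ hA
  have hq₁ : 0 < 1 - q := sub_pos.mpr hq
  have hC : 0 ≤ C := by simpa using (norm_nonneg _).trans (hA 0)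
  have hε : 0 ≤ ε :=
    nonneg_of_mul_nonneg_right ((by positivity : 0 ≤ C * ‖F c - c‖).trans hc) hq₁
  have hη : 0 ≤ η := (norm_nonneg _).trans (hF' c (mem_closedBall_self hε))
  have hcontr : ∀ x ∈ closedBall c ε, ∀ y ∈ closedBall c ε, p (F x - F y) ≤ q * p (x - y) :=
    fun x hx y hy => adaptedSeminorm_image_sub_le hρ hA (convex_closedBall c ε)
      (fun g hg => (hF g hg).hasFDerivWithinAt) hF' hx hy
  have hsub : p.closedBall c ε ⊆ closedBall c ε := fun x hx =>
    mem_closedBall_iff_norm.mpr ((hp _).trans hx)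
  have hFc : p (F c - c) ≤ (1 - q) * ε := (hpC _).trans hc
  obtain ⟨x, hx, hFx⟩ := exists_fixedPoint_of_seminorm_contraction hp hpC (by positivity) hq
    (fun x hx y hy => hcontr x (hsub hx) y (hsub hy))
    (isClosed_le ((Seminorm.continuous_of_le_mul_norm hpC).comp (continuous_sub_right c))
      continuous_const)
    (mapsTo_closedBall_of_seminorm_contraction (by positivity) hcontr hsub hFc)
    (p.mem_closedBall_self hε)
  refine ⟨x, hsub hx, hFx, ?_, fun y hy hFy => eq_of_seminorm_contraction hp hq hcontr hy
    (hsub hx) hFy hFx⟩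
  rw [div_mul_eq_mul_div, le_div_iff₀ hq₁]
  calc ‖x - c‖ * (1 - q) ≤ (1 - q) * p (x - c) := by rw [mul_comm]; gcongr; exact hp _
    _ ≤ p (F c - c) := seminorm_sub_le_of_contraction hcontr (hsub hx) (mem_closedBall_self hε) hFx
    _ ≤ C * ‖F c - c‖ := hpC _

theorem stmt_13_general {E : Type*} [NormedAddCommGroup E] [NormedSpace ℝ E] [CompleteSpace E]
    (T : E → E) (h : E) (hfix : T h = h)
    (U : Set E) (hUopen : IsOpen U) (hhU : h ∈ U)
    (D : E → E →L[ℝ] E)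
    (hdiff : ∀ g ∈ U, HasFDerivAt T (D g) g)
    (hcont : ContinuousAt D h)
    (hr : ∃ r : ℝ, r < 1 ∧
      Tendsto (fun n : ℕ => ‖(D h) ^ n‖ ^ (1 / (n : ℝ))) atTop (nhds r))
    (P : ℕ → E →L[ℝ] E)
    (hPnorm : ∀ k, ‖P k‖ ≤ 1)
    (hPD : Tendsto (fun k => ‖(P k).comp (D h) - D h‖) atTop (nhds 0))
    (hPh : Tendsto (fun k => ‖P k h - h‖) atTop (nhds 0)) :
    ∃ K : ℕ, ∃ ε : ℝ, 0 < ε ∧ ∃ hs : ℕ → E,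
      (∀ k : ℕ, K ≤ k →
        P k (T (hs k)) = hs k ∧ ‖hs k - h‖ ≤ ε ∧
          ∀ x : E, ‖x - h‖ ≤ ε → P k (T x) = x → x = hs k) ∧
      Tendsto (fun k => ‖hs k - h‖) atTop (nhds 0) := by
  obtain ⟨r, hr₁, hr⟩ := hr
  have hr₀ : 0 ≤ r := ge_of_tendsto' hr fun n => by positivity
  obtain ⟨ρ, hrρ, hρ₁⟩ := exists_between hr₁
  obtain ⟨C, hC, hA⟩ := exists_norm_pow_le_mul_pow hr hrρ
  obtain ⟨η, hη, hq⟩ : ∃ η > 0, ρ + C * η < 1 :=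
    ⟨(1 - ρ) / (2 * C), div_pos (by linarith) (by positivity), by field_simp; linarith⟩
  obtain ⟨ε, hε, hball⟩ : ∃ ε > 0, ∀ g ∈ closedBall h ε, g ∈ U ∧ ‖D g - D h‖ ≤ η / 2 := by
    refine nhds_basis_closedBall.eventually_iff.mp ((hUopen.eventually_mem hhU).and ?_)
    exact ((tendsto_iff_norm_sub_tendsto_zero.mp hcont).eventually_lt_const
      (half_pos hη)).mono fun g hg => hg.le
  have hgood : ∀ᶠ k in atTop,
      ‖(P k).comp (D h) - D h‖ ≤ η / 2 ∧ C * ‖P k h - h‖ ≤ (1 - (ρ + C * η)) * ε := by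
    have hCPh : Tendsto (fun k => C * ‖P k h - h‖) atTop (𝓝 0) := by
      simpa using hPh.const_mul C
    exact ((hPD.eventually_lt_const (half_pos hη)).and
      (hCPh.eventually_lt_const (mul_pos (sub_pos.mpr hq) hε))).mono
      fun k hk => ⟨hk.1.le, hk.2.le⟩
  obtain ⟨K, hK⟩ := eventually_atTop.mp <| hgood.mono fun k hk =>
    exists_fixedPoint_of_norm_fderiv_sub_le (c := h) (F := fun x => P k (T x))
      (F' := fun g => (P k).comp (D g)) (by linarith) hA hq
      (fun g hg => (P k).hasFDerivAt.comp g (hdiff g (hball g hg).1))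
      (fun g hg => ((P k).norm_comp_sub_le_of_norm_le_one (hPnorm k)).trans
        (by linarith [(hball g hg).2, hk.1]))
      (by simpa only [hfix] using hk.2)
  choose! hs hs_mem hs_fix hs_le hs_unique using hK
  refine ⟨K, ε, hε, hs, fun k hk => ⟨hs_fix k hk, mem_closedBall_iff_norm.mp (hs_mem k hk),
    fun x hx hFx => hs_unique k hk x (mem_closedBall_iff_norm.mpr hx) hFx⟩, ?_⟩
  refine squeeze_zero' (Eventually.of_forall fun k => norm_nonneg _)
    (eventually_atTop.mpr ⟨K, fun k hk => ?_⟩)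
    (by simpa using hPh.const_mul (C / (1 - (ρ + C * η))))
  simpa only [hfix] using hs_le k hk

/-- **Lemma B.5 (lem:fp:exist).** Existence, local uniqueness and consistency of the projected
fixed point in the sieve/projection method: if `Th = h`, `T` is continuously Fréchet
differentiable at `h` with `r(D_h) < 1`, and `(Πₖ)` are idempotent linear contractions with
`‖ΠₖD_h − D_h‖ → 0`, `‖Πₖh − h‖ → 0` and `‖Πₖ(Tψ) − Tψ‖ → 0` for each `ψ`, then for some
`K` and `ε > 0` the projected equation `Πₖ(Tx) = x` has a unique solution `hₖ` in the ball
`‖x − h‖ ≤ ε` for every `k ≥ K`, and `‖hₖ − h‖ → 0`. -/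
theorem stmt_13 {E : Type*} [NormedAddCommGroup E] [NormedSpace ℝ E] [CompleteSpace E]
    (T : E → E) (h : E) (hfix : T h = h)
    (U : Set E) (hUopen : IsOpen U) (hhU : h ∈ U)
    (D : E → E →L[ℝ] E)
    (hdiff : ∀ g ∈ U, HasFDerivAt T (D g) g)
    (hcont : ContinuousAt D h)
    (hr : ∃ r : ℝ, r < 1 ∧
      Tendsto (fun n : ℕ => ‖(D h) ^ n‖ ^ (1 / (n : ℝ))) atTop (nhds r))
    (P : ℕ → E →L[ℝ] E)
    (hidem : ∀ k, (P k).comp (P k) = P k)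
    (hPnorm : ∀ k, ‖P k‖ ≤ 1)
    (hPD : Tendsto (fun k => ‖(P k).comp (D h) - D h‖) atTop (nhds 0))
    (hPh : Tendsto (fun k => ‖P k h - h‖) atTop (nhds 0))
    (hPT : ∀ ψ : E, Tendsto (fun k => ‖P k (T ψ) - T ψ‖) atTop (nhds 0)) :
    ∃ K : ℕ, ∃ ε : ℝ, 0 < ε ∧ ∃ hs : ℕ → E,
      (∀ k : ℕ, K ≤ k →
        P k (T (hs k)) = hs k ∧ ‖hs k - h‖ ≤ ε ∧
          ∀ x : E, ‖x - h‖ ≤ ε → P k (T x) = x → x = hs k) ∧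
      Tendsto (fun k => ‖hs k - h‖) atTop (nhds 0) :=
  stmt_13_general T h hfix U hUopen hhU D hdiff hcont hr P hPnorm hPD hPh
end

section
/- Let E be a normed vector space, Π : E → E a linear map with ‖Πψ‖ ≤ ‖ψ‖ for all ψ ∈ E, T : E → E a map, D : E → E a continuous linear map, and h, h' ∈ E with Th = h and Π(Th') = h'. Suppose there are constants C > ε ≥ 0 such that ‖ψ − Π(Dψ)‖ ≥ C‖ψ‖ for all ψ ∈ E, and ‖Th' − Th − D(h' − h)‖ ≤ ε‖h' − h‖. Then (C − ε)·‖h − h'‖ ≤ ‖h − Πh‖. (Quantitative core of the proof of Lemma B.6 (lem:bias:fp): the approximation error of the projected fixed point is controlled by the projection bias ‖h − Πh‖.) -/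
/-- Quantitative core of the proof of Lemma B.6 (lem:bias:fp): if `Π` is a linear contraction,
`Th = h`, `Π(Th') = h'`, `I − ΠD` is bounded below by `C`, and the differentiability remainder
at `h` in direction `h' − h` is bounded by `ε‖h' − h‖` with `0 ≤ ε < C`, then
`(C − ε)‖h − h'‖ ≤ ‖h − Πh‖`. -/
theorem stmt_14 {E : Type*} [NormedAddCommGroup E] [NormedSpace ℝ E]
    (P : E →ₗ[ℝ] E) (hP : ∀ ψ : E, ‖P ψ‖ ≤ ‖ψ‖)
    (T : E → E) (D : E →L[ℝ] E)
    (h h' : E) (hfix : T h = h) (hfix' : P (T h') = h')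
    (C ε : ℝ) (hε : 0 ≤ ε) (hεC : ε < C)
    (hlb : ∀ ψ : E, C * ‖ψ‖ ≤ ‖ψ - P (D ψ)‖)
    (hrem : ‖T h' - T h - D (h' - h)‖ ≤ ε * ‖h' - h‖) :
    (C - ε) * ‖h - h'‖ ≤ ‖h - P h‖ := by
  have key : (h' - h) - P (D (h' - h)) = P (T h' - T h - D (h' - h)) + (P h - h) := by
    simp only [map_sub, hfix', hfix]
    abel
  have h1 := hlb (h' - h)
  rw [key] at h1
  have h2 : ‖P (T h' - T h - D (h' - h)) + (P h - h)‖ ≤ ε * ‖h' - h‖ + ‖h - P h‖ := by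
    calc ‖P (T h' - T h - D (h' - h)) + (P h - h)‖
        ≤ ‖P (T h' - T h - D (h' - h))‖ + ‖P h - h‖ := norm_add_le _ _
      _ ≤ ε * ‖h' - h‖ + ‖h - P h‖ := by
          rw [norm_sub_rev]
          exact add_le_add ((hP _).trans hrem) le_rfl
  have : ‖h - h'‖ = ‖h' - h‖ := norm_sub_rev _ _
  rw [this]
  linarith [h1.trans h2]
end

section
/- Let H be a normed vector space, M : H → H a continuous linear operator, and Π : H → H a linear operator with ‖Πψ‖ ≤ ‖ψ‖ for all ψ. Let φ, φ' ∈ H be unit vectors and ρ, ρ' ≥ 0 real numbers with Mφ = ρφ and Π(Mφ') = ρ'φ'. Then |ρ' − ρ| ≤ ‖M‖·‖φ' − φ‖ + ρ·‖Πφ − φ‖. (Step 2 of the proof of Lemma B.2 (lem:bias): perturbation bound for the projected Perron-Frobenius eigenvalue in terms of the eigenfunction error and projection bias.) -/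
/-! The Rayleigh-type identity `ρ'φ' - ρφ = Π(M(φ' - φ)) + ρ(Πφ - φ)`, obtained by inserting
`Π(Mφ) = ρ Πφ`, bounds the eigenvalue gap: since `φ, φ'` are unit vectors and `ρ, ρ' ≥ 0`,
`|ρ' - ρ|` is at most `‖ρ'φ' - ρφ‖`, and the two terms are controlled by `‖M‖` and the
contractivity of `Π`. -/

lemma abs_sub_le_norm_smul_sub_smul {E : Type*} [SeminormedAddCommGroup E] [NormedSpace ℝ E]
    {x y : E} (hx : ‖x‖ = 1) (hy : ‖y‖ = 1) {a b : ℝ} (ha : 0 ≤ a) (hb : 0 ≤ b) :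
    |a - b| ≤ ‖a • x - b • y‖ := by
  simpa [norm_smul, hx, hy, abs_of_nonneg ha, abs_of_nonneg hb]
    using abs_norm_sub_norm_le (a • x) (b • y)

lemma smul_sub_smul_eq_of_eigen {E : Type*} [AddCommGroup E] [Module ℝ E]
    (M P : E →ₗ[ℝ] E) {φ φ' : E} {ρ ρ' : ℝ}
    (heig : M φ = ρ • φ) (heig' : P (M φ') = ρ' • φ') :
    ρ' • φ' - ρ • φ = P (M (φ' - φ)) + ρ • (P φ - φ) := by
  rw [map_sub, map_sub, heig', heig, map_smul, smul_sub]
  abel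

/-- Step 2 of the proof of Lemma B.2 (lem:bias): perturbation bound for the projected
Perron-Frobenius eigenvalue.  If `Mφ = ρφ`, `Π(Mφ') = ρ'φ'` with `φ, φ'` unit vectors,
`ρ, ρ' ≥ 0`, and `Π` a linear contraction, then
`|ρ' − ρ| ≤ ‖M‖‖φ' − φ‖ + ρ‖Πφ − φ‖`. -/
theorem stmt_16 {H : Type*} [NormedAddCommGroup H] [NormedSpace ℝ H]
    (M : H →L[ℝ] H) (P : H →ₗ[ℝ] H) (hP : ∀ ψ : H, ‖P ψ‖ ≤ ‖ψ‖)
    (φ φ' : H) (hφ : ‖φ‖ = 1) (hφ' : ‖φ'‖ = 1)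
    (ρ ρ' : ℝ) (hρ : 0 ≤ ρ) (hρ' : 0 ≤ ρ')
    (heig : M φ = ρ • φ) (heig' : P (M φ') = ρ' • φ') :
    |ρ' - ρ| ≤ ‖M‖ * ‖φ' - φ‖ + ρ * ‖P φ - φ‖ :=
  calc |ρ' - ρ| ≤ ‖ρ' • φ' - ρ • φ‖ := abs_sub_le_norm_smul_sub_smul hφ' hφ hρ' hρ
    _ = ‖P (M (φ' - φ)) + ρ • (P φ - φ)‖ :=
        congrArg norm (smul_sub_smul_eq_of_eigen M.toLinearMap P heig heig')
    _ ≤ ‖P (M (φ' - φ))‖ + ‖ρ • (P φ - φ)‖ := norm_add_le _ _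
    _ ≤ ‖M‖ * ‖φ' - φ‖ + ρ * ‖P φ - φ‖ := by
        rw [norm_smul, Real.norm_of_nonneg hρ]
        gcongr
        exact (hP _).trans (M.le_opNorm _)
end

section
/- Let H be a real inner product space and u, v ∈ H with ‖u‖ = ‖v‖ = 1 and ⟨u, v⟩ ≥ 0. Then for every real scalar c, ‖u − v‖² ≤ 2‖u − c·v‖². (Inequality (e:oblique), used in the proofs of Lemmas B.2 and B.4 to pass from spectral-projection error to eigenfunction error under the sign normalization ⟨u,v⟩ ≥ 0.) -/
open scoped RealInnerProductSpace

/-- Inequality (e:oblique), used in the proofs of Lemmas B.2 and B.4: if `u, v` are unit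
vectors in a real inner product space with `⟨u, v⟩ ≥ 0`, then for every real `c`,
`‖u − v‖² ≤ 2‖u − c·v‖²`. -/
theorem stmt_17 {H : Type*} [NormedAddCommGroup H] [InnerProductSpace ℝ H]
    (u v : H) (hu : ‖u‖ = 1) (hv : ‖v‖ = 1) (huv : 0 ≤ ⟪u, v⟫) :
    ∀ c : ℝ, ‖u - v‖ ^ 2 ≤ 2 * ‖u - c • v‖ ^ 2 := by
  intro c
  have h1 : ‖u - v‖ ^ 2 = ‖u‖ ^ 2 - 2 * ⟪u, v⟫ + ‖v‖ ^ 2 := by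
    rw [← real_inner_self_eq_norm_sq, ← real_inner_self_eq_norm_sq,
      ← real_inner_self_eq_norm_sq, inner_sub_sub_self, real_inner_comm v u]
    ring
  have h2 : ‖u - c • v‖ ^ 2 = ‖u‖ ^ 2 - 2 * (c * ⟪u, v⟫) + c ^ 2 * ‖v‖ ^ 2 := by
    rw [← real_inner_self_eq_norm_sq, ← real_inner_self_eq_norm_sq,
      ← real_inner_self_eq_norm_sq, inner_sub_sub_self, real_inner_smul_left,
      real_inner_smul_right, real_inner_smul_left, real_inner_comm v u, real_inner_smul_right]
    ring
  have ht : ⟪u, v⟫ ≤ 1 := by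
    calc ⟪u, v⟫ ≤ ‖u‖ * ‖v‖ := real_inner_le_norm u v
    _ = 1 := by rw [hu, hv]; ring
  rw [h1, h2, hu, hv]
  nlinarith [sq_nonneg (c - ⟪u, v⟫), mul_nonneg huv (sub_nonneg.2 ht)]
end
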